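/- arXiv:math/0608623 — 3 statements merged into one kernel-verified Lean document; each statement's English description precedes it below -/
import Mathlib

section
/- Let (A; {E_i}; A*; {E*_i}) be a Leonard system on V, and X an element of the subalgebra generated by A with X E*_0 = 0. Then X = 0. -/
open Polynomial

/-- The primitive idempotent `E_i = ∏_{j ≠ i} (A - θ_j I)/(θ_i - θ_j)` of a
multiplicity-free operator `A` with eigenvalues `θ_0, …, θ_d`. -/
noncomputable def primIdem {K : Type} [Field K] {V : Type} [AddCommGroup V] [Module K V]
    {d : ℕ} (A : Module.End K V) (θ : Fin (d+1) → K) (i : Fin (d+1)) : Module.End K V :=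
  Polynomial.aeval A (∏ j ∈ Finset.univ.erase i, ((θ i - θ j)⁻¹ • (X - C (θ j))))

/-- The polynomial `τ_i(λ) = (λ-θ_0)(λ-θ_1)⋯(λ-θ_{i-1})`. -/
noncomputable def tauP {K : Type} [Field K] (d : ℕ) (θ : Fin (d+1) → K) (i : ℕ) :
    Polynomial K :=
  ∏ k ∈ Finset.univ.filter (fun k : Fin (d+1) => (k : ℕ) < i), (X - C (θ k))

/-- The polynomial `η_i(λ) = (λ-θ_d)(λ-θ_{d-1})⋯(λ-θ_{d-i+1})`. -/
noncomputable def etaP {K : Type} [Field K] (d : ℕ) (θ : Fin (d+1) → K) (i : ℕ) :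
    Polynomial K :=
  ∏ k ∈ Finset.univ.filter (fun k : Fin (d+1) => d - i < (k : ℕ)), (X - C (θ k))

/-- A Leonard system on a `(d+1)`-dimensional vector space `V` over a field `K`. -/
structure LeonardSystem (K V : Type) [Field K] [AddCommGroup V] [Module K V] (d : ℕ) where
  A : Module.End K V
  As : Module.End K V
  θ : Fin (d+1) → K
  θs : Fin (d+1) → K
  hfin : FiniteDimensional K V
  hdim : Module.finrank K V = d + 1
  θ_inj : Function.Injective θ
  θs_inj : Function.Injective θs
  hEig : ∀ i, Module.End.HasEigenvalue A (θ i)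
  hEigs : ∀ i, Module.End.HasEigenvalue As (θs i)
  hFar : ∀ i j : Fin (d+1), ((i:ℕ) + 1 < j ∨ (j:ℕ) + 1 < i) →
    primIdem A θ i * As * primIdem A θ j = 0
  hNear : ∀ i j : Fin (d+1), ((i:ℕ) + 1 = j ∨ (j:ℕ) + 1 = i) →
    primIdem A θ i * As * primIdem A θ j ≠ 0
  hFars : ∀ i j : Fin (d+1), ((i:ℕ) + 1 < j ∨ (j:ℕ) + 1 < i) →
    primIdem As θs i * A * primIdem As θs j = 0
  hNears : ∀ i j : Fin (d+1), ((i:ℕ) + 1 = j ∨ (j:ℕ) + 1 = i) →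
    primIdem As θs i * A * primIdem As θs j ≠ 0

namespace LeonardSystem

variable {K : Type} [Field K] {V : Type} [AddCommGroup V] [Module K V] {d : ℕ}
  (L : LeonardSystem K V d)

/-- `E_i`, the `i`-th primitive idempotent of `A`. -/
noncomputable def E (i : Fin (d+1)) : Module.End K V := primIdem L.A L.θ i

/-- `E*_i`, the `i`-th primitive idempotent of `A*`. -/
noncomputable def Es (i : Fin (d+1)) : Module.End K V := primIdem L.As L.θs i

/-- `τ_i(A)`. -/
noncomputable def tau (i : ℕ) : Module.End K V := Polynomial.aeval L.A (tauP d L.θ i)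

/-- `η_i(A)`. -/
noncomputable def eta (i : ℕ) : Module.End K V := Polynomial.aeval L.A (etaP d L.θ i)

/-- The first split sequence `φ_i = (θ*_0-θ*_i) tr(τ_i(A)E*_0)/tr(τ_{i-1}(A)E*_0)`,
meaningful for `1 ≤ i ≤ d`. -/
noncomputable def φ (i : ℕ) : K :=
  if h : i < d + 1 then
    (L.θs 0 - L.θs ⟨i, h⟩) * (LinearMap.trace K V (L.tau i * L.Es 0))
      / (LinearMap.trace K V (L.tau (i-1) * L.Es 0))
  else 0

/-- The second split sequence `ϕ_i = (θ*_0-θ*_i) tr(η_i(A)E*_0)/tr(η_{i-1}(A)E*_0)`,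
meaningful for `1 ≤ i ≤ d`. -/
noncomputable def ϕ (i : ℕ) : K :=
  if h : i < d + 1 then
    (L.θs 0 - L.θs ⟨i, h⟩) * (LinearMap.trace K V (L.eta i * L.Es 0))
      / (LinearMap.trace K V (L.eta (i-1) * L.Es 0))
  else 0

/-- The switching element `S = ∑_r (ϕ_d⋯ϕ_{d-r+1})/(φ_1⋯φ_r) E_r`. -/
noncomputable def S : Module.End K V :=
  ∑ r : Fin (d+1),
    ((∏ k ∈ Finset.Icc (d - (r:ℕ) + 1) d, L.ϕ k) / (∏ k ∈ Finset.Icc 1 (r:ℕ), L.φ k)) • L.E r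

/-- The dual switching element `S* = ∑_r (ϕ_1⋯ϕ_r)/(φ_1⋯φ_r) E*_r`. -/
noncomputable def Ss : Module.End K V :=
  ∑ r : Fin (d+1),
    ((∏ k ∈ Finset.Icc 1 (r:ℕ), L.ϕ k) / (∏ k ∈ Finset.Icc 1 (r:ℕ), L.φ k)) • L.Es r

end LeonardSystem
section Aux

variable {K : Type} [Field K] {V : Type} [AddCommGroup V] [Module K V] {d : ℕ}

lemma aeval_apply_eig {f : Module.End K V} {μ : K} {x : V} (h : f x = μ • x) (p : K[X]) :
    Polynomial.aeval f p x = p.eval μ • x := by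
  refine p.induction_on ?_ ?_ ?_
  · intro a; simp [Module.algebraMap_end_apply]
  · intro p q hp hq; simp [hp, hq, add_smul]
  · intro n a hna
    rw [mul_comm, pow_succ', mul_assoc, map_mul, Module.End.mul_apply, mul_comm, hna]
    simp only [h, smul_smul, aeval_X, eval_mul, eval_C, eval_pow, eval_X,
      LinearMap.map_smulₛₗ, RingHom.id_apply, mul_comm]

lemma primIdem_eq (B : Module.End K V) (θ : Fin (d+1) → K) (i : Fin (d+1)) :
    primIdem B θ i = Polynomial.aeval B (Lagrange.basis Finset.univ θ i) := by
  unfold primIdem Lagrange.basis Lagrange.basisDivisor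
  congr 1
  exact Finset.prod_congr rfl fun j _ => smul_eq_C_mul _

lemma sum_primIdem (B : Module.End K V) (θ : Fin (d+1) → K) (hθ : Function.Injective θ) :
    ∑ i, primIdem B θ i = 1 := by
  simp_rw [primIdem_eq]
  rw [← map_sum, Lagrange.sum_basis (Set.injOn_of_injective hθ) Finset.univ_nonempty, map_one]

lemma aeval_prod_eq_zero [FiniteDimensional K V] (B : Module.End K V) (θ : Fin (d+1) → K)
    (hdim : Module.finrank K V = d + 1) (hθ : Function.Injective θ)
    (hEig : ∀ i, Module.End.HasEigenvalue B (θ i)) :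
    Polynomial.aeval B (∏ j : Fin (d+1), (X - C (θ j))) = 0 := by
  have hdvd : (∏ j : Fin (d+1), (X - C (θ j))) ∣ LinearMap.charpoly B := by
    refine Finset.prod_dvd_of_coprime ((pairwise_coprime_X_sub_C hθ).set_pairwise _) ?_
    intro i _
    rw [Polynomial.dvd_iff_isRoot]
    exact (Module.End.isRoot_of_hasEigenvalue (hEig i)).dvd (LinearMap.minpoly_dvd_charpoly B)
  have hmon : (∏ j : Fin (d+1), (X - C (θ j))).Monic :=
    monic_prod_of_monic _ _ fun j _ => monic_X_sub_C _
  have hdeg : (LinearMap.charpoly B).natDegree ≤ (∏ j : Fin (d+1), (X - C (θ j))).natDegree := by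
    rw [LinearMap.charpoly_natDegree, hdim,
      Polynomial.natDegree_prod_of_monic _ _ (fun j _ => monic_X_sub_C _)]
    simp
  have heq := Polynomial.eq_of_monic_of_dvd_of_natDegree_le hmon (LinearMap.charpoly_monic B)
    hdvd hdeg
  rw [← heq]
  exact LinearMap.aeval_self_charpoly B

end Aux
section Aux2

variable {K : Type} [Field K] {V : Type} [AddCommGroup V] [Module K V] {d : ℕ}

lemma prod_key (θ : Fin (d+1) → K) (i : Fin (d+1)) :
    (X - C (θ i)) * Lagrange.basis Finset.univ θ i
      = C (∏ j ∈ Finset.univ.erase i, (θ i - θ j)⁻¹) * ∏ j : Fin (d+1), (X - C (θ j)) := by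
  unfold Lagrange.basis Lagrange.basisDivisor
  rw [Finset.prod_mul_distrib, ← map_prod,
    ← Finset.mul_prod_erase Finset.univ (fun j => X - C (θ j)) (Finset.mem_univ i)]
  ring

lemma apply_primIdem [FiniteDimensional K V] (B : Module.End K V) (θ : Fin (d+1) → K)
    (hdim : Module.finrank K V = d + 1) (hθ : Function.Injective θ)
    (hEig : ∀ i, Module.End.HasEigenvalue B (θ i)) (i : Fin (d+1)) (x : V) :
    B (primIdem B θ i x) = θ i • primIdem B θ i x := by
  have h0 : Polynomial.aeval B ((X - C (θ i)) * Lagrange.basis Finset.univ θ i) = 0 := by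
    rw [prod_key, map_mul, aeval_prod_eq_zero B θ hdim hθ hEig, mul_zero]
  rw [map_mul, map_sub, aeval_X, aeval_C, ← primIdem_eq] at h0
  have h1 := congrArg (fun T : Module.End K V => T x) h0
  simp only [Module.End.mul_apply, LinearMap.sub_apply, LinearMap.zero_apply,
    Module.algebraMap_end_apply] at h1
  have := sub_eq_zero.mp h1
  exact this

lemma primIdem_apply_self {B : Module.End K V} {θ : Fin (d+1) → K}
    (hθ : Function.Injective θ) {i : Fin (d+1)} {x : V} (hx : B x = θ i • x) :
    primIdem B θ i x = x := by
  rw [primIdem_eq, aeval_apply_eig hx,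
    Lagrange.eval_basis_self (Set.injOn_of_injective hθ) (Finset.mem_univ i), one_smul]

lemma primIdem_apply_ne {B : Module.End K V} {θ : Fin (d+1) → K}
    {i j : Fin (d+1)} (hij : i ≠ j) {x : V} (hx : B x = θ j • x) :
    primIdem B θ i x = 0 := by
  rw [primIdem_eq, aeval_apply_eig hx,
    Lagrange.eval_basis_of_ne hij (Finset.mem_univ j), zero_smul]

lemma primIdem_apply_mem_span [FiniteDimensional K V] (B : Module.End K V)
    (θ : Fin (d+1) → K) (hdim : Module.finrank K V = d + 1) (hθ : Function.Injective θ)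
    (hEig : ∀ i, Module.End.HasEigenvalue B (θ i)) (y : Fin (d+1) → V)
    (hy : ∀ j, B.HasEigenvector (θ j) (y j)) (i : Fin (d+1)) (x : V) :
    primIdem B θ i x ∈ Submodule.span K {y i} := by
  have hli : LinearIndependent K y := B.eigenvectors_linearIndependent' θ hθ y hy
  have hcard : Fintype.card (Fin (d+1)) = Module.finrank K V := by simp [hdim]
  set b := basisOfLinearIndependentOfCardEqFinrank hli hcard with hbdef
  have hb : ∀ j, b j = y j := fun j => by
    rw [hbdef, coe_basisOfLinearIndependentOfCardEqFinrank]
  set z := primIdem B θ i x with hz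
  have hzx : B z = θ i • z := apply_primIdem B θ hdim hθ hEig i x
  have h1 : primIdem B θ i z = z := primIdem_apply_self hθ hzx
  have hrep := b.sum_repr z
  have hzspan : z = (b.repr z) i • y i := by
    conv_lhs => rw [← h1, ← hrep]
    rw [map_sum, Finset.sum_eq_single i]
    · rw [map_smul, hb, primIdem_apply_self hθ (Module.End.mem_eigenspace_iff.mp (hy i).1)]
    · intro j _ hj
      rw [map_smul, hb, primIdem_apply_ne hj.symm
        (Module.End.mem_eigenspace_iff.mp (hy j).1), smul_zero]
    · intro hi; exact absurd (Finset.mem_univ i) hi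
  rw [hzspan]
  exact Submodule.smul_mem _ _ (Submodule.mem_span_singleton_self _)

end Aux2

namespace LeonardSystem

variable {K : Type} [Field K] {V : Type} [AddCommGroup V] [Module K V] {d : ℕ}

lemma claim1 (L : LeonardSystem K V d) {v : V} (hv : L.As v = L.θs 0 • v) :
    ∀ n : ℕ, ∀ h : Fin (d+1), n < (h:ℕ) → L.Es h ((L.A ^ n) v) = 0 := by
  haveI := L.hfin
  intro n
  induction n with
  | zero =>
    intro h hh
    show primIdem L.As L.θs h v = 0
    exact primIdem_apply_ne (Fin.ne_of_val_ne (by simpa using hh.ne')) hv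
  | succ n ih =>
    intro h hh
    have hw : (L.A ^ (n+1)) v = L.A ((L.A ^ n) v) := by
      rw [pow_succ', Module.End.mul_apply]
    set w := (L.A ^ n) v with hwdef
    have hw2 : w = ∑ l, L.Es l w := by
      have h2 := congrArg (fun T : Module.End K V => T w)
        (sum_primIdem L.As L.θs L.θs_inj)
      simpa [LinearMap.sum_apply, LeonardSystem.Es] using h2.symm
    calc L.Es h ((L.A ^ (n+1)) v) = L.Es h (L.A (∑ l, L.Es l w)) := by rw [hw, ← hw2]
      _ = ∑ l, L.Es h (L.A (L.Es l w)) := by rw [map_sum, map_sum]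
      _ = 0 := Finset.sum_eq_zero fun l _ => ?_
    rcases le_or_gt (l:ℕ) n with hl | hl
    · have h3 := L.hFars h l (Or.inr (by omega))
      have h4 := congrArg (fun T : Module.End K V => T w) h3
      simpa [Module.End.mul_apply, LeonardSystem.Es] using h4
    · rw [show L.Es l w = 0 from ih l hl, map_zero, map_zero]

lemma claim2 (L : LeonardSystem K V d) {v : V} (hv : L.As v = L.θs 0 • v) (hv0 : v ≠ 0)
    (y : Fin (d+1) → V) (hy : ∀ j, L.As.HasEigenvector (L.θs j) (y j)) :
    ∀ n : ℕ, (hn : n < d + 1) → L.Es ⟨n, hn⟩ ((L.A ^ n) v) ≠ 0 := by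
  haveI := L.hfin
  intro n
  induction n with
  | zero =>
    intro hn
    have h1 : L.Es ⟨0, hn⟩ v = v := by
      rw [Fin.mk_zero]
      exact primIdem_apply_self L.θs_inj hv
    intro hz
    rw [pow_zero, Module.End.one_apply, h1] at hz
    exact hv0 hz
  | succ n ih =>
    intro hn
    have hnd : n < d + 1 := by omega
    set u := L.Es ⟨n, hnd⟩ ((L.A ^ n) v) with hu
    have hu0 : u ≠ 0 := ih hnd
    set w := (L.A ^ n) v with hwdef
    have hw2 : w = ∑ l, L.Es l w := by
      have h2 := congrArg (fun T : Module.End K V => T w)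
        (sum_primIdem L.As L.θs L.θs_inj)
      simpa [LinearMap.sum_apply, LeonardSystem.Es] using h2.symm
    have key : L.Es ⟨n+1, hn⟩ ((L.A ^ (n+1)) v) = L.Es ⟨n+1, hn⟩ (L.A u) := by
      have hw : (L.A ^ (n+1)) v = L.A w := by
        rw [hwdef, pow_succ', Module.End.mul_apply]
      calc L.Es ⟨n+1, hn⟩ ((L.A ^ (n+1)) v) = L.Es ⟨n+1, hn⟩ (L.A (∑ l, L.Es l w)) := by
            rw [hw, ← hw2]
        _ = ∑ l, L.Es ⟨n+1, hn⟩ (L.A (L.Es l w)) := by rw [map_sum, map_sum]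
        _ = L.Es ⟨n+1, hn⟩ (L.A u) := ?_
      rw [Finset.sum_eq_single (⟨n, hnd⟩ : Fin (d+1))]
      · intro l _ hl
        have hlv : (l:ℕ) ≠ n := fun e => hl (Fin.ext e)
        rcases lt_or_gt_of_ne hlv with h' | h'
        · have h3 := L.hFars ⟨n+1, hn⟩ l (Or.inr (by simpa using by omega))
          have h4 := congrArg (fun T : Module.End K V => T w) h3
          simpa [Module.End.mul_apply, LeonardSystem.Es] using h4
        · rw [show L.Es l w = 0 from L.claim1 hv n l h', map_zero, map_zero]
      · intro hi; exact absurd (Finset.mem_univ _) hi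
    intro hzero
    rw [key] at hzero
    refine L.hNears ⟨n+1, hn⟩ ⟨n, hnd⟩ (Or.inr rfl) ?_
    ext x
    simp only [Module.End.mul_apply, LinearMap.zero_apply]
    have h1 : L.Es ⟨n, hnd⟩ x ∈ Submodule.span K {y ⟨n, hnd⟩} :=
      primIdem_apply_mem_span L.As L.θs L.hdim L.θs_inj L.hEigs y hy _ x
    have h2 : u ∈ Submodule.span K {y ⟨n, hnd⟩} :=
      primIdem_apply_mem_span L.As L.θs L.hdim L.θs_inj L.hEigs y hy _ w
    obtain ⟨a, ha⟩ := Submodule.mem_span_singleton.mp h1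
    obtain ⟨b, hb⟩ := Submodule.mem_span_singleton.mp h2
    have hbne : b ≠ 0 := fun hb0 => hu0 (by rw [← hb, hb0, zero_smul])
    have h5 : L.Es ⟨n, hnd⟩ x = (a * b⁻¹) • u := by
      rw [← hb, ← ha, smul_smul, mul_assoc, inv_mul_cancel₀ hbne, mul_one]
    show primIdem L.As L.θs ⟨n+1, hn⟩ (L.A (primIdem L.As L.θs ⟨n, hnd⟩ x)) = 0
    have h6 : primIdem L.As L.θs ⟨n, hnd⟩ x = (a * b⁻¹) • u := h5
    rw [h6, map_smul]
    have h7 : primIdem L.As L.θs ⟨n+1, hn⟩ (L.A u) = 0 := hzero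
    rw [map_smul, h7, smul_zero]

end LeonardSystem

/-- if `X` lies in the subalgebra generated by `A` and `X E*_0 = 0`,
then `X = 0`. -/

theorem LeonardSystem.eq_zero_of_mul_Es_zero {K : Type} [Field K] {V : Type}
    [AddCommGroup V] [Module K V] {d : ℕ} (L : LeonardSystem K V d) (Xop : Module.End K V)
    (hX : Xop ∈ Algebra.adjoin K {L.A}) (h0 : Xop * L.Es 0 = 0) : Xop = 0 := by
  haveI := L.hfin
  obtain ⟨v, hv⟩ := (L.hEigs 0).exists_hasEigenvector
  have hv1 : L.As v = L.θs 0 • v := Module.End.mem_eigenspace_iff.mp hv.1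
  have hv0 : v ≠ 0 := hv.2
  choose y hy using fun j => (L.hEigs j).exists_hasEigenvector
  rw [Algebra.adjoin_singleton_eq_range_aeval] at hX
  obtain ⟨p, hp0⟩ := hX
  have hp : Polynomial.aeval L.A p = Xop := hp0
  have hXv : Xop v = 0 := by
    have hE : L.Es 0 v = v := primIdem_apply_self L.θs_inj hv1
    calc Xop v = Xop (L.Es 0 v) := by rw [hE]
      _ = (Xop * L.Es 0) v := rfl
      _ = 0 := by rw [h0]; rfl
  have hcomm : ∀ n : ℕ, Xop * L.A ^ n = L.A ^ n * Xop := by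
    intro n
    rw [← hp, show L.A ^ n = Polynomial.aeval L.A ((X : K[X]) ^ n) by rw [map_pow, aeval_X],
      ← map_mul, ← map_mul, mul_comm]
  have hXw : ∀ n : ℕ, Xop ((L.A ^ n) v) = 0 := by
    intro n
    have h1 := congrArg (fun T : Module.End K V => T v) (hcomm n)
    simp only [Module.End.mul_apply] at h1
    rw [h1, hXv, map_zero]
  have hli : LinearIndependent K (fun i : Fin (d+1) => (L.A ^ (i:ℕ)) v) := by
    rw [Fintype.linearIndependent_iff]
    intro c hc
    have step : ∀ i : Fin (d+1), (∀ j : Fin (d+1), (i:ℕ) < (j:ℕ) → c j = 0) → c i = 0 := by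
      intro i hgt
      have h1 := congrArg (fun x => L.Es i x) hc
      simp only [map_sum, map_smul, map_zero] at h1
      rw [Finset.sum_eq_single i] at h1
      · have hne : L.Es i ((L.A ^ (i:ℕ)) v) ≠ 0 := by
          have := L.claim2 hv1 hv0 y hy (i:ℕ) i.isLt
          simpa [Fin.eta] using this
        exact (smul_eq_zero.mp h1).resolve_right hne
      · intro j _ hj
        rcases lt_or_gt_of_ne (fun e => hj (Fin.ext e) : (j:ℕ) ≠ (i:ℕ)) with h' | h'
        · rw [L.claim1 hv1 (j:ℕ) i h', smul_zero]
        · rw [hgt j h', zero_smul]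
      · intro hi; exact absurd (Finset.mem_univ _) hi
    have main : ∀ m : ℕ, ∀ i : Fin (d+1), d - m ≤ (i:ℕ) → c i = 0 := by
      intro m
      induction m with
      | zero =>
        intro i hi
        refine step i fun j hj => absurd hj (by omega : ¬ (i:ℕ) < (j:ℕ))
      | succ m ih =>
        intro i hi
        rcases le_or_gt (d - m) (i:ℕ) with h' | h'
        · exact ih i h'
        · refine step i fun j hj => ih j (by omega)
    intro i; exact main d i (by omega)
  have hcard : Fintype.card (Fin (d+1)) = Module.finrank K V := by simp [L.hdim]
  set b := basisOfLinearIndependentOfCardEqFinrank hli hcard with hbdef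
  refine Module.Basis.ext b fun i => ?_
  have hb : b i = (L.A ^ (i:ℕ)) v := by
    rw [hbdef, coe_basisOfLinearIndependentOfCardEqFinrank]
  rw [hb, hXw]
  rfl
end

section
/- Let (A; {E_i}; A*; {E*_i}) be a Leonard system on V with switching element S, and let D be the subalgebra generated by A. For a nonzero linear operator X on V, the following are equivalent: (i) X is a scalar multiple of S; (ii) X ∈ D and X E*_0 V ⊆ E*_d V. Moreover if these hold then X E*_0 V = E*_d V. -/
open Polynomial

/-!
Let `ξ` span `E*_0 V`. As `A` acts irreducibly tridiagonally on an `A*`-eigenbasis, `ξ` is cyclic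
for `A`: an element of `D` is determined by its value at `ξ`, and the vectors `g(A) ξ` with
`deg g < d` span `E*_0 V + ⋯ + E*_{d-1} V`, the orthogonal complement of `E*_d V` for a bilinear
form `⟨ , ⟩` in which `A` and `A*` are self-adjoint. On the split bases `τ_i(A) ξ` and `η_i(A) ξ`
the operator `A*` acts as `θ*_i` plus `φ_i`, resp. `ϕ_i`, times a lowering shift, and comparing
`⟨A* η_{d+1-j}(A) ξ, τ_j(A) ξ⟩` with `⟨η_{d+1-j}(A) ξ, A* τ_j(A) ξ⟩` shows that the coefficients
of `S` make `S ξ = ∑_r c_r E_r ξ` satisfy `c_r ⟨E_r ξ, E_r ξ⟩ ∏_{k ≠ r} (θ_r - θ_k) = const`.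
By Lagrange interpolation `S ξ` is then orthogonal to every `g(A) ξ` with `deg g < d`, i.e.
`S ξ` spans `E*_d V`, and both directions of the theorem follow.
-/

section Eigenbasis

variable {K V : Type*} [Field K] [AddCommGroup V] [Module K V]

theorem Module.Basis.repr_apply_eq_sum {ι : Type*} [Fintype ι] (b : Module.Basis ι K V)
    (f : Module.End K V) (x : V) (j : ι) :
    b.repr (f x) j = ∑ l, b.repr x l * b.repr (f (b l)) j := by
  conv_lhs => rw [← b.sum_repr x]
  simp only [map_sum, map_smul, Finset.sum_apply', Finsupp.smul_apply, smul_eq_mul]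

theorem Module.Basis.repr_aeval_of_apply_eq_smul {ι : Type*} (b : Module.Basis ι K V)
    {M : Module.End K V} {μ : ι → K} (hM : ∀ i, M (b i) = μ i • b i) (g : K[X]) (x : V)
    (i : ι) :
    b.repr (aeval M g x) i = g.eval (μ i) * b.repr x i := by
  have hcoord : (b.coord i).comp (aeval M g) = g.eval (μ i) • b.coord i :=
    b.ext fun j => by
      have hj : M.HasEigenvector (μ j) (b j) :=
        ⟨Module.End.mem_eigenspace_iff.mpr (hM j), b.ne_zero j⟩
      by_cases hij : j = i
      · subst hij; simp [Module.End.aeval_apply_of_hasEigenvector hj]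
      · simp [Module.End.aeval_apply_of_hasEigenvector hj, Ne.symm hij]
  exact LinearMap.congr_fun hcoord x

noncomputable def eigenbasis {d : ℕ} (M : Module.End K V) (μ : Fin (d+1) → K)
    (hμ : Function.Injective μ) (hM : ∀ i, M.HasEigenvalue (μ i))
    (hdim : Module.finrank K V = d + 1) : Module.Basis (Fin (d+1)) K V :=
  basisOfLinearIndependentOfCardEqFinrank
    (Module.End.eigenvectors_linearIndependent' M μ hμ _
      fun i => (hM i).exists_hasEigenvector.choose_spec) (by simp [hdim])

theorem apply_eigenbasis {d : ℕ} (M : Module.End K V) (μ : Fin (d+1) → K)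
    (hμ : Function.Injective μ) (hM : ∀ i, M.HasEigenvalue (μ i))
    (hdim : Module.finrank K V = d + 1) (i : Fin (d+1)) :
    M (eigenbasis M μ hμ hM hdim i) = μ i • eigenbasis M μ hμ hM hdim i := by
  rw [eigenbasis, coe_basisOfLinearIndependentOfCardEqFinrank]
  exact (hM i).exists_hasEigenvector.choose_spec.apply_eq_smul

end Eigenbasis

section PrimIdem

variable {K : Type} [Field K] {V : Type} [AddCommGroup V] [Module K V] {d : ℕ}
  (b : Module.Basis (Fin (d+1)) K V) {M : Module.End K V} {μ : Fin (d+1) → K}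

theorem primIdem_eq_aeval_lagrangeBasis (M : Module.End K V) (μ : Fin (d+1) → K)
    (i : Fin (d+1)) :
    primIdem M μ i = aeval M (Lagrange.basis Finset.univ μ i) := by
  simp only [primIdem, Lagrange.basis, Lagrange.basisDivisor, smul_eq_C_mul]

theorem primIdem_comp_rev (M : Module.End K V) (θ : Fin (d+1) → K) (i : Fin (d+1)) :
    primIdem M (θ ∘ Fin.rev) i = primIdem M θ i.rev := by
  rw [primIdem, primIdem]
  congr 1
  exact Finset.prod_nbij' Fin.rev Fin.rev (by simp [Fin.rev_eq_iff])
    (by simp [Fin.rev_eq_iff]) (by simp) (by simp) (by simp)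

variable (hμ : Function.Injective μ) (hM : ∀ i, M (b i) = μ i • b i)
include hμ hM

theorem primIdem_apply (i : Fin (d+1)) (x : V) : primIdem M μ i x = b.repr x i • b i := by
  refine b.ext_elem fun j => ?_
  rw [primIdem_eq_aeval_lagrangeBasis, b.repr_aeval_of_apply_eq_smul hM, map_smul,
    Finsupp.smul_apply, b.repr_self_apply, smul_eq_mul]
  by_cases hij : i = j
  · subst hij
    simp [Lagrange.eval_basis_self hμ.injOn (Finset.mem_univ i)]
  · simp [Lagrange.eval_basis_of_ne hij (Finset.mem_univ j), hij]

theorem trace_mul_primIdem (N : Module.End K V) (i : Fin (d+1)) :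
    LinearMap.trace K V (N * primIdem M μ i) = b.repr (N (b i)) i := by
  rw [LinearMap.trace_eq_matrix_trace K b, Matrix.trace, Finset.sum_eq_single i]
  · simp [LinearMap.toMatrix_apply, primIdem_apply b hμ hM]
  · intro j _ hji
    simp [LinearMap.toMatrix_apply, primIdem_apply b hμ hM, hji]
  · simp

theorem primIdem_mul_mul_primIdem_eq_zero_iff (N : Module.End K V) (i j : Fin (d+1)) :
    primIdem M μ i * N * primIdem M μ j = 0 ↔ b.repr (N (b j)) i = 0 := by
  constructor
  · intro h
    have hj := LinearMap.congr_fun h (b j)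
    simp only [Module.End.mul_apply, primIdem_apply b hμ hM, b.repr_self_apply, if_pos,
      one_smul, LinearMap.zero_apply, smul_eq_zero, b.ne_zero, or_false] at hj
    exact hj
  · intro h
    ext x
    simp [primIdem_apply b hμ hM, h]

end PrimIdem

section SplitPolynomials

variable {K : Type} [Field K] {d : ℕ} (θ : Fin (d+1) → K)

theorem eval_tauP (i : ℕ) (t : K) :
    (tauP d θ i).eval t
      = ∏ k ∈ Finset.univ.filter (fun k : Fin (d+1) => (k : ℕ) < i), (t - θ k) := by
  simp [tauP, eval_prod]

theorem eval_etaP (i : ℕ) (t : K) :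
    (etaP d θ i).eval t
      = ∏ k ∈ Finset.univ.filter (fun k : Fin (d+1) => d - i < (k : ℕ)), (t - θ k) := by
  simp [etaP, eval_prod]

theorem tauP_zero : tauP d θ 0 = 1 := by
  simp [tauP]

theorem tauP_monic (i : ℕ) : (tauP d θ i).Monic :=
  monic_prod_of_monic _ _ fun k _ => monic_X_sub_C (θ k)

theorem card_filter_val_lt {i : ℕ} (hi : i ≤ d + 1) :
    (Finset.univ.filter fun k : Fin (d+1) => (k : ℕ) < i).card = i := by
  rw [Fin.card_filter_val_lt]
  omega

theorem natDegree_tauP {i : ℕ} (hi : i ≤ d + 1) : (tauP d θ i).natDegree = i := by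
  rw [tauP, natDegree_prod_of_monic _ _ fun k _ => monic_X_sub_C (θ k)]
  simp [card_filter_val_lt hi]

theorem eval_tauP_eq_zero {i : ℕ} {s : Fin (d+1)} (hs : (s : ℕ) < i) :
    (tauP d θ i).eval (θ s) = 0 := by
  rw [eval_tauP]
  exact Finset.prod_eq_zero (by simpa using hs) (sub_self _)

theorem eval_etaP_eq_zero {i : ℕ} {s : Fin (d+1)} (hs : d - i < (s : ℕ)) :
    (etaP d θ i).eval (θ s) = 0 := by
  rw [eval_etaP]
  exact Finset.prod_eq_zero (by simpa using hs) (sub_self _)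

variable {θ}

theorem eval_tauP_ne_zero (hθ : Function.Injective θ) {i : ℕ} {s : Fin (d+1)} (hs : i ≤ s) :
    (tauP d θ i).eval (θ s) ≠ 0 := by
  rw [eval_tauP, Finset.prod_ne_zero_iff]
  intro k hk
  have hks : k ≠ s := by rintro rfl; simp at hk; omega
  exact sub_ne_zero.mpr (hθ.ne hks.symm)

theorem tauP_comp_rev {i : ℕ} (hi : i ≤ d) : tauP d (θ ∘ Fin.rev) i = etaP d θ i := by
  refine Finset.prod_nbij' Fin.rev Fin.rev ?_ ?_ (by simp) (by simp) (by simp)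
  all_goals
    intro k hk
    simp only [Finset.mem_filter, Finset.mem_univ, true_and, Fin.val_rev] at hk ⊢
    omega

theorem eval_tauP_mul_eval_etaP (r : Fin (d+1)) :
    (tauP d θ r).eval (θ r) * (etaP d θ (d - r)).eval (θ r)
      = ∏ k ∈ Finset.univ.erase r, (θ r - θ k) := by
  rw [eval_tauP, eval_etaP, ← Finset.prod_union]
  · congr 1
    ext k
    simp only [Finset.mem_union, Finset.mem_filter, Finset.mem_univ, true_and,
      Finset.mem_erase, ne_eq, and_true, ← Fin.val_inj]
    omega
  · rw [Finset.disjoint_filter]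
    intro k _ hk
    omega

theorem eq_C_mul_tauP_of_eval_eq_zero (hθ : Function.Injective θ) {i : ℕ} (hi : i ≤ d + 1)
    {g : K[X]} (hg : g.degree < ↑(i + 1))
    (hroots : ∀ r : Fin (d+1), (r : ℕ) < i → g.eval (θ r) = 0) :
    g = C (g.coeff i) * tauP d θ i := by
  refine Polynomial.eq_of_degree_sub_lt_of_eval_index_eq (s := Finset.univ.filter
    fun k : Fin (d+1) => (k : ℕ) < i) hθ.injOn ?_ fun r hr => ?_
  · rw [card_filter_val_lt hi, degree_lt_iff_coeff_zero]
    intro m hm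
    have hτ := natDegree_tauP θ hi
    rw [coeff_sub, coeff_C_mul]
    rcases hm.lt_or_eq with hm | rfl
    · rw [coeff_eq_zero_of_degree_lt (hg.trans_le (by exact_mod_cast hm)),
        coeff_eq_zero_of_natDegree_lt (hτ.trans_lt hm), mul_zero, sub_zero]
    · have hlead : (tauP d θ i).coeff i = 1 := by
        simpa [hτ] using (tauP_monic θ i).coeff_natDegree
      rw [hlead, mul_one, sub_self]
  · simp only [Finset.mem_filter, Finset.mem_univ, true_and] at hr
    rw [hroots r hr, eval_mul, eval_tauP_eq_zero θ hr, mul_zero]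

theorem sum_eval_div_prod_sub_eq_zero (hθ : Function.Injective θ) {g : K[X]} (hg : g.degree < d) :
    ∑ r : Fin (d+1), g.eval (θ r) / ∏ k ∈ Finset.univ.erase r, (θ r - θ k) = 0 := by
  rw [← Lagrange.coeff_eq_sum hθ.injOn
    (by simpa using hg.trans (by exact_mod_cast d.lt_succ_self))]
  simpa using coeff_eq_zero_of_degree_lt hg

end SplitPolynomials

namespace LeonardSystem

variable {K : Type} [Field K] {V : Type} [AddCommGroup V] [Module K V] {d : ℕ}
  (L : LeonardSystem K V d)

noncomputable def basisA : Module.Basis (Fin (d+1)) K V :=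
  eigenbasis L.A L.θ L.θ_inj L.hEig L.hdim

noncomputable def basisAs : Module.Basis (Fin (d+1)) K V :=
  eigenbasis L.As L.θs L.θs_inj L.hEigs L.hdim

theorem A_basisA (i : Fin (d+1)) : L.A (L.basisA i) = L.θ i • L.basisA i := apply_eigenbasis ..

theorem As_basisAs (i : Fin (d+1)) : L.As (L.basisAs i) = L.θs i • L.basisAs i :=
  apply_eigenbasis ..

theorem basisA_repr_aeval (g : K[X]) (x : V) (r : Fin (d+1)) :
    L.basisA.repr (aeval L.A g x) r = g.eval (L.θ r) * L.basisA.repr x r :=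
  L.basisA.repr_aeval_of_apply_eq_smul L.A_basisA g x r

theorem basisAs_repr_As (x : V) (j : Fin (d+1)) :
    L.basisAs.repr (L.As x) j = L.θs j * L.basisAs.repr x j := by
  simpa using L.basisAs.repr_aeval_of_apply_eq_smul L.As_basisAs X x j

theorem E_apply (i : Fin (d+1)) (x : V) : L.E i x = L.basisA.repr x i • L.basisA i :=
  primIdem_apply L.basisA L.θ_inj L.A_basisA i x

theorem Es_apply (i : Fin (d+1)) (x : V) : L.Es i x = L.basisAs.repr x i • L.basisAs i :=
  primIdem_apply L.basisAs L.θs_inj L.As_basisAs i x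

theorem range_Es (i : Fin (d+1)) : LinearMap.range (L.Es i) = K ∙ L.basisAs i := by
  refine le_antisymm ?_ (Submodule.span_singleton_le_iff_mem _ _ |>.mpr ⟨L.basisAs i, ?_⟩)
  · rintro _ ⟨x, rfl⟩
    rw [Es_apply]
    exact Submodule.smul_mem _ _ (Submodule.mem_span_singleton_self _)
  · simp [Es_apply]

theorem basisAs_repr_A_basisAs_eq_zero {i j : Fin (d+1)}
    (h : (i : ℕ) + 1 < j ∨ (j : ℕ) + 1 < i) :
    L.basisAs.repr (L.A (L.basisAs j)) i = 0 :=
  (primIdem_mul_mul_primIdem_eq_zero_iff L.basisAs L.θs_inj L.As_basisAs L.A i j).mp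
    (L.hFars i j h)

theorem basisAs_repr_A_basisAs_ne_zero {i j : Fin (d+1)}
    (h : (i : ℕ) + 1 = j ∨ (j : ℕ) + 1 = i) :
    L.basisAs.repr (L.A (L.basisAs j)) i ≠ 0 :=
  mt (primIdem_mul_mul_primIdem_eq_zero_iff L.basisAs L.θs_inj L.As_basisAs L.A i j).mpr
    (L.hNears i j h)

theorem basisA_repr_As_basisA_eq_zero {i j : Fin (d+1)}
    (h : (i : ℕ) + 1 < j ∨ (j : ℕ) + 1 < i) :
    L.basisA.repr (L.As (L.basisA j)) i = 0 :=
  (primIdem_mul_mul_primIdem_eq_zero_iff L.basisA L.θ_inj L.A_basisA L.As i j).mp (L.hFar i j h)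

theorem basisA_repr_As_basisA_ne_zero {i j : Fin (d+1)}
    (h : (i : ℕ) + 1 = j ∨ (j : ℕ) + 1 = i) :
    L.basisA.repr (L.As (L.basisA j)) i ≠ 0 :=
  mt (primIdem_mul_mul_primIdem_eq_zero_iff L.basisA L.θ_inj L.A_basisA L.As i j).mpr
    (L.hNear i j h)

/-- The Leonard system `Φ^⇓` (eigenvalues of `A` in reverse order), whose first split sequence is
the second split sequence of `Φ`. -/
noncomputable def reverse : LeonardSystem K V d where
  A := L.A
  As := L.As
  θ := L.θ ∘ Fin.rev
  θs := L.θs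
  hfin := L.hfin
  hdim := L.hdim
  θ_inj := L.θ_inj.comp Fin.rev_injective
  θs_inj := L.θs_inj
  hEig i := L.hEig i.rev
  hEigs := L.hEigs
  hFar i j h := by
    rw [primIdem_comp_rev, primIdem_comp_rev]
    exact L.hFar _ _ (by simp only [Fin.val_rev]; omega)
  hNear i j h := by
    rw [primIdem_comp_rev, primIdem_comp_rev]
    exact L.hNear _ _ (by simp only [Fin.val_rev]; omega)
  hFars := L.hFars
  hNears := L.hNears

theorem reverse_tau {i : ℕ} (hi : i ≤ d) : L.reverse.tau i = L.eta i := by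
  rw [tau, eta, reverse, tauP_comp_rev hi]

theorem reverse_φ (i : ℕ) : L.reverse.φ i = L.ϕ i := by
  unfold φ ϕ
  split_ifs with hi
  · rw [L.reverse_tau (by omega), L.reverse_tau (by omega)]
    rfl
  · rfl

noncomputable def ξ : V := L.basisAs 0

noncomputable def ζ : V := L.basisAs (Fin.last d)

theorem basisAs_repr_pow_A_ξ_eq_zero {k : ℕ} {j : Fin (d+1)} (h : k < j) :
    L.basisAs.repr ((L.A ^ k) L.ξ) j = 0 := by
  induction k generalizing j with
  | zero =>
    have hj : (0 : Fin (d+1)) ≠ j := by rintro rfl; simp at h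
    simp [ξ, hj]
  | succ k ih =>
    rw [pow_succ', Module.End.mul_apply, L.basisAs.repr_apply_eq_sum]
    refine Finset.sum_eq_zero fun l _ => ?_
    by_cases hl : k < l
    · rw [ih hl, zero_mul]
    · rw [L.basisAs_repr_A_basisAs_eq_zero (Or.inr (by omega)), mul_zero]

theorem basisAs_repr_pow_A_ξ_self_ne_zero {k : ℕ} (hk : k ≤ d) :
    L.basisAs.repr ((L.A ^ k) L.ξ) ⟨k, by omega⟩ ≠ 0 := by
  induction k with
  | zero => simp [ξ]
  | succ k ih =>
    rw [pow_succ', Module.End.mul_apply, L.basisAs.repr_apply_eq_sum,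
      Finset.sum_eq_single ⟨k, by omega⟩]
    · exact mul_ne_zero (ih (by omega)) (L.basisAs_repr_A_basisAs_ne_zero (Or.inr rfl))
    · intro l _ hl
      rcases lt_or_gt_of_ne (Fin.val_ne_of_ne hl) with hl | hl
      · rw [L.basisAs_repr_A_basisAs_eq_zero (Or.inr (by simp; omega)), mul_zero]
      · rw [L.basisAs_repr_pow_A_ξ_eq_zero hl, zero_mul]
    · simp

theorem basisAs_repr_aeval_ξ_eq_zero {g : K[X]} {j : Fin (d+1)} (hg : g.natDegree < j) :
    L.basisAs.repr (aeval L.A g L.ξ) j = 0 := by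
  rw [aeval_eq_sum_range, LinearMap.sum_apply, map_sum, Finset.sum_apply']
  refine Finset.sum_eq_zero fun k hk => ?_
  rw [Finset.mem_range] at hk
  rw [LinearMap.smul_apply, map_smul, Finsupp.smul_apply,
    L.basisAs_repr_pow_A_ξ_eq_zero (by omega), smul_zero]

/-- The `A`-orbit of `ξ` climbs the basis `basisAs` one step at a time, as `A` is irreducible
tridiagonal on it. -/
theorem exists_aeval_ξ_eq {i : ℕ} (hi : i ≤ d + 1) {x : V}
    (hx : ∀ j : Fin (d+1), i ≤ j → L.basisAs.repr x j = 0) :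
    ∃ g ∈ degreeLT K i, aeval L.A g L.ξ = x := by
  induction i generalizing x with
  | zero =>
    refine ⟨0, Submodule.zero_mem _, ?_⟩
    rw [map_zero, LinearMap.zero_apply, eq_comm, ← L.basisAs.repr.map_eq_zero_iff]
    exact Finsupp.ext fun j => hx j (Nat.zero_le _)
  | succ i ih =>
    set t := L.basisAs.repr x ⟨i, by omega⟩ / L.basisAs.repr ((L.A ^ i) L.ξ) ⟨i, by omega⟩
      with ht
    obtain ⟨g, hg, hgx⟩ := ih (x := x - t • (L.A ^ i) L.ξ) (by omega) fun j hj => by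
      rw [map_sub, map_smul, Finsupp.sub_apply, Finsupp.smul_apply, smul_eq_mul]
      rcases hj.lt_or_eq with hj | hj
      · rw [hx j hj, L.basisAs_repr_pow_A_ξ_eq_zero hj, mul_zero, sub_zero]
      · rw [show j = ⟨i, by omega⟩ from Fin.ext hj.symm, ht,
          div_mul_cancel₀ _ (L.basisAs_repr_pow_A_ξ_self_ne_zero (by omega)), sub_self]
    refine ⟨g + C t * X ^ i, Submodule.add_mem _ (degreeLT_mono (by omega) hg) ?_, ?_⟩
    · rw [mem_degreeLT]
      exact (degree_C_mul_X_pow_le i t).trans_lt (by exact_mod_cast i.lt_succ_self)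
    · rw [map_add, LinearMap.add_apply, hgx, map_mul, aeval_C, aeval_X_pow, Module.End.mul_apply,
        Module.algebraMap_end_apply, sub_add_cancel]

theorem exists_aeval_ξ_eq_basisAs (j : Fin (d+1)) :
    ∃ g ∈ degreeLT K (j + 1), aeval L.A g L.ξ = L.basisAs j :=
  L.exists_aeval_ξ_eq (by omega) fun l hl => by
    simp [(Fin.ne_of_lt (Fin.lt_def.mpr hl)).symm]

theorem basisA_repr_ξ_ne_zero (r : Fin (d+1)) : L.basisA.repr L.ξ r ≠ 0 := by
  obtain ⟨g, -, hg⟩ := L.exists_aeval_ξ_eq (x := L.basisA r) le_rfl fun j hj => by omega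
  have h := L.basisA_repr_aeval g L.ξ r
  rw [hg, L.basisA.repr_self_apply, if_pos rfl] at h
  exact right_ne_zero_of_mul (by rw [← h]; exact one_ne_zero)

theorem aeval_eq_zero_of_aeval_apply_ξ_eq_zero {g : K[X]} (h : aeval L.A g L.ξ = 0) :
    aeval L.A g = 0 := by
  refine L.basisA.ext fun r => ?_
  have hr := L.basisA_repr_aeval g L.ξ r
  rw [h, map_zero, Finsupp.zero_apply, eq_comm, mul_eq_zero,
    or_iff_left (L.basisA_repr_ξ_ne_zero r)] at hr
  rw [Module.End.aeval_apply_of_hasEigenvector ⟨Module.End.mem_eigenspace_iff.mpr (L.A_basisA r),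
    L.basisA.ne_zero r⟩, hr, zero_smul, LinearMap.zero_apply]

theorem basisA_repr_tau_apply (i : ℕ) (x : V) (r : Fin (d+1)) :
    L.basisA.repr (L.tau i x) r = (tauP d L.θ i).eval (L.θ r) * L.basisA.repr x r :=
  L.basisA_repr_aeval _ x r

theorem basisA_repr_As_apply_eq_zero {x : V} {i : ℕ}
    (hx : ∀ l : Fin (d+1), (l : ℕ) < i → L.basisA.repr x l = 0) {r : Fin (d+1)}
    (hr : (r : ℕ) + 1 < i) :
    L.basisA.repr (L.As x) r = 0 := by
  rw [L.basisA.repr_apply_eq_sum]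
  refine Finset.sum_eq_zero fun l _ => ?_
  by_cases hl : (l : ℕ) < i
  · rw [hx l hl, zero_mul]
  · rw [L.basisA_repr_As_basisA_eq_zero (Or.inl (by omega)), mul_zero]

theorem basisA_repr_As_apply_of_succ_eq {x : V} {i r : Fin (d+1)}
    (hx : ∀ l : Fin (d+1), l < i → L.basisA.repr x l = 0) (hr : (r : ℕ) + 1 = i) :
    L.basisA.repr (L.As x) r = L.basisA.repr x i * L.basisA.repr (L.As (L.basisA i)) r := by
  rw [L.basisA.repr_apply_eq_sum, Finset.sum_eq_single i]
  · intro l _ hl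
    rcases lt_or_gt_of_ne hl with hl | hl
    · rw [hx l hl, zero_mul]
    · rw [L.basisA_repr_As_basisA_eq_zero (Or.inl (by rw [Fin.lt_def] at hl; omega)), mul_zero]
  · simp

/-- `A* τ_i(A) ξ - θ*_i τ_i(A) ξ` lies in `E*_0 V + ⋯ + E*_{i-1} V`, so it is `g(A) ξ` with
`deg g < i`; as `A*` maps `E_i V + ⋯ + E_d V` into `E_{i-1} V + ⋯ + E_d V`, `g` vanishes at
`θ_0, …, θ_{i-2}` and is a multiple of `τ_{i-1}`. -/
theorem exists_As_tau_apply_ξ {i : ℕ} (h1 : 1 ≤ i) (h2 : i ≤ d) :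
    ∃ c : K, c ≠ 0 ∧
      L.As (L.tau i L.ξ) = L.θs ⟨i, by omega⟩ • L.tau i L.ξ + c • L.tau (i-1) L.ξ := by
  set x := L.As (L.tau i L.ξ) - L.θs ⟨i, by omega⟩ • L.tau i L.ξ with hx
  have hτ : ∀ l : Fin (d+1), (l : ℕ) < i → L.basisA.repr (L.tau i L.ξ) l = 0 :=
    fun l hl => by rw [L.basisA_repr_tau_apply, eval_tauP_eq_zero _ hl, zero_mul]
  have hxP : ∀ r : Fin (d+1), (r : ℕ) < i →
      L.basisA.repr x r = L.basisA.repr (L.As (L.tau i L.ξ)) r :=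
    fun r hr => by
      rw [hx, map_sub, map_smul, Finsupp.sub_apply, Finsupp.smul_apply, hτ r hr, smul_zero,
        sub_zero]
  obtain ⟨g, hg, hgx⟩ : ∃ g ∈ degreeLT K i, aeval L.A g L.ξ = x :=
    L.exists_aeval_ξ_eq (by omega) fun j hj => by
      rw [hx, map_sub, map_smul, Finsupp.sub_apply, Finsupp.smul_apply, L.basisAs_repr_As,
        smul_eq_mul, ← sub_mul]
      rcases hj.lt_or_eq with hj | hj
      · rw [tau, L.basisAs_repr_aeval_ξ_eq_zero (by rwa [natDegree_tauP _ (by omega)]), mul_zero]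
      · rw [show j = ⟨i, by omega⟩ from Fin.ext hj.symm, sub_self, zero_mul]
  have hgτ : g = C (g.coeff (i-1)) * tauP d L.θ (i-1) := by
    refine eq_C_mul_tauP_of_eval_eq_zero L.θ_inj (by omega)
      (by rw [← mem_degreeLT, Nat.sub_add_cancel h1]; exact hg) fun r hr => ?_
    have hr0 := hxP r (by omega)
    rw [L.basisA_repr_As_apply_eq_zero hτ (by omega), ← hgx, L.basisA_repr_aeval] at hr0
    exact (mul_eq_zero.mp hr0).resolve_right (L.basisA_repr_ξ_ne_zero r)
  have hx_ne : x ≠ 0 := by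
    intro h0
    have hpred := hxP ⟨i-1, by omega⟩ (by simp; omega)
    rw [h0, map_zero, Finsupp.zero_apply, L.basisA_repr_As_apply_of_succ_eq (i := ⟨i, by omega⟩)
      (fun l hl => hτ l hl) (by simp; omega), L.basisA_repr_tau_apply] at hpred
    exact mul_ne_zero (mul_ne_zero (eval_tauP_ne_zero L.θ_inj le_rfl) (L.basisA_repr_ξ_ne_zero _))
      (L.basisA_repr_As_basisA_ne_zero (Or.inl (by simp; omega))) hpred.symm
  have hxc : x = g.coeff (i-1) • L.tau (i-1) L.ξ := by
    rw [← hgx]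
    nth_rewrite 1 [hgτ]
    rw [map_mul, aeval_C, Module.End.mul_apply, Module.algebraMap_end_apply]
    rfl
  refine ⟨g.coeff (i-1), fun hc => hx_ne (by rw [hxc, hc, zero_smul]), ?_⟩
  rw [← hxc, hx, add_sub_cancel]

theorem θs_sub_mul_basisAs_repr_tau_apply_ξ {i : ℕ} (hi : i ≤ d) {c : K}
    (hc : L.As (L.tau i L.ξ) = L.θs ⟨i, by omega⟩ • L.tau i L.ξ + c • L.tau (i-1) L.ξ) :
    (L.θs 0 - L.θs ⟨i, by omega⟩) * L.basisAs.repr (L.tau i L.ξ) 0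
      = c * L.basisAs.repr (L.tau (i-1) L.ξ) 0 := by
  have h := congrArg (fun v => L.basisAs.repr v 0) hc
  simp only [L.basisAs_repr_As, map_add, map_smul, Finsupp.add_apply, Finsupp.smul_apply,
    smul_eq_mul] at h
  linear_combination h

theorem basisAs_repr_tau_apply_ξ_zero_ne_zero {i : ℕ} (hi : i ≤ d) :
    L.basisAs.repr (L.tau i L.ξ) 0 ≠ 0 := by
  induction i with
  | zero => simp [tau, tauP_zero, ξ]
  | succ i ih =>
    obtain ⟨c, hc0, hc⟩ := L.exists_As_tau_apply_ξ (i := i + 1) (by omega) hi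
    have h := L.θs_sub_mul_basisAs_repr_tau_apply_ξ hi hc
    intro h0
    rw [h0, mul_zero, eq_comm, mul_eq_zero] at h
    exact h.elim hc0 (ih (by omega))

theorem trace_tau_mul_Es_zero (i : ℕ) :
    LinearMap.trace K V (L.tau i * L.Es 0) = L.basisAs.repr (L.tau i L.ξ) 0 :=
  trace_mul_primIdem L.basisAs L.θs_inj L.As_basisAs _ 0

theorem φ_eq_of_As_tau_apply_ξ {i : ℕ} (hi : i ≤ d) {c : K}
    (hc : L.As (L.tau i L.ξ) = L.θs ⟨i, by omega⟩ • L.tau i L.ξ + c • L.tau (i-1) L.ξ) :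
    L.φ i = c := by
  rw [φ, dif_pos (by omega), trace_tau_mul_Es_zero, trace_tau_mul_Es_zero,
    L.θs_sub_mul_basisAs_repr_tau_apply_ξ hi hc,
    mul_div_cancel_right₀ _ (L.basisAs_repr_tau_apply_ξ_zero_ne_zero (by omega))]

theorem φ_ne_zero {i : ℕ} (h1 : 1 ≤ i) (h2 : i ≤ d) : L.φ i ≠ 0 := by
  obtain ⟨c, hc0, hc⟩ := L.exists_As_tau_apply_ξ h1 h2
  rwa [L.φ_eq_of_As_tau_apply_ξ h2 hc]

theorem As_tau_apply_ξ {i : ℕ} (h1 : 1 ≤ i) (h2 : i ≤ d) :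
    L.As (L.tau i L.ξ)
      = L.θs ⟨i, by omega⟩ • L.tau i L.ξ + L.φ i • L.tau (i-1) L.ξ := by
  obtain ⟨c, -, hc⟩ := L.exists_As_tau_apply_ξ h1 h2
  rwa [L.φ_eq_of_As_tau_apply_ξ h2 hc]

/-- The weights that symmetrize the tridiagonal matrix of `A` in the basis `basisAs`. -/
noncomputable def κ (j : Fin (d+1)) : K :=
  ∏ l ∈ Finset.univ.filter (fun l : Fin d => (l : ℕ) < j),
    L.basisAs.repr (L.A (L.basisAs l.succ)) l.castSucc
      / L.basisAs.repr (L.A (L.basisAs l.castSucc)) l.succ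

theorem κ_ne_zero (j : Fin (d+1)) : L.κ j ≠ 0 :=
  Finset.prod_ne_zero_iff.mpr fun _ _ =>
    div_ne_zero (L.basisAs_repr_A_basisAs_ne_zero (Or.inl (by simp)))
      (L.basisAs_repr_A_basisAs_ne_zero (Or.inr (by simp)))

theorem κ_succ_mul (l : Fin d) :
    L.κ l.succ * L.basisAs.repr (L.A (L.basisAs l.castSucc)) l.succ
      = L.κ l.castSucc * L.basisAs.repr (L.A (L.basisAs l.succ)) l.castSucc := by
  have hfilter : Finset.univ.filter (fun l' : Fin d => (l' : ℕ) < l.succ)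
      = insert l (Finset.univ.filter fun l' : Fin d => (l' : ℕ) < l.castSucc) := by
    ext l'
    simp only [Finset.mem_filter, Finset.mem_univ, true_and, Finset.mem_insert, Fin.val_succ,
      Fin.val_castSucc, ← Fin.val_inj]
    omega
  rw [κ, κ, hfilter, Finset.prod_insert (by simp), mul_comm (_ / _), mul_assoc,
    div_mul_cancel₀ _ (L.basisAs_repr_A_basisAs_ne_zero (Or.inr (by simp)))]

theorem κ_mul_basisAs_repr_A_basisAs_comm (i j : Fin (d+1)) :
    L.κ j * L.basisAs.repr (L.A (L.basisAs i)) j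
      = L.κ i * L.basisAs.repr (L.A (L.basisAs j)) i := by
  wlog hij : i ≤ j generalizing i j
  · exact (this j i (le_of_not_ge hij)).symm
  rcases hij.eq_or_lt with rfl | hij
  · rfl
  by_cases hsucc : (j : ℕ) = i + 1
  · obtain ⟨l, rfl, rfl⟩ : ∃ l : Fin d, l.castSucc = i ∧ l.succ = j :=
      ⟨⟨i, by omega⟩, rfl, Fin.ext (by simp [hsucc])⟩
    exact L.κ_succ_mul l
  · rw [L.basisAs_repr_A_basisAs_eq_zero (Or.inr (by rw [Fin.lt_def] at hij; omega)),
      L.basisAs_repr_A_basisAs_eq_zero (Or.inl (by rw [Fin.lt_def] at hij; omega)), mul_zero,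
      mul_zero]

noncomputable def form : LinearMap.BilinForm K V :=
  Matrix.toBilin L.basisAs (Matrix.diagonal L.κ)

theorem form_basisAs_left (i : Fin (d+1)) (y : V) :
    L.form (L.basisAs i) y = L.κ i * L.basisAs.repr y i := by
  simp [form, Matrix.toBilin_apply, Matrix.diagonal_apply, Finsupp.single_apply]

theorem form_basisAs_right (x : V) (j : Fin (d+1)) :
    L.form x (L.basisAs j) = L.basisAs.repr x j * L.κ j := by
  simp [form, Matrix.toBilin_apply, Matrix.diagonal_apply, Finsupp.single_apply]

theorem form_A (x y : V) : L.form (L.A x) y = L.form x (L.A y) := by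
  have h : L.form.compl₁₂ L.A LinearMap.id = L.form.compl₁₂ LinearMap.id L.A :=
    LinearMap.ext_basis L.basisAs L.basisAs fun i j => by
      simp only [LinearMap.compl₁₂_apply, LinearMap.id_apply, form_basisAs_left,
        form_basisAs_right]
      rw [mul_comm]
      exact L.κ_mul_basisAs_repr_A_basisAs_comm i j
  exact LinearMap.congr_fun₂ h x y

theorem form_As (x y : V) : L.form (L.As x) y = L.form x (L.As y) := by
  simp only [form, Matrix.toBilin_apply, L.basisAs_repr_As]
  refine Finset.sum_congr rfl fun i _ => Finset.sum_congr rfl fun j _ => ?_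
  by_cases hij : i = j
  · subst hij; ring
  · simp [hij]

theorem form_basisA_basisA_of_ne {r s : Fin (d+1)} (hrs : r ≠ s) :
    L.form (L.basisA r) (L.basisA s) = 0 := by
  have h := L.form_A (L.basisA r) (L.basisA s)
  rw [L.A_basisA, L.A_basisA, map_smul, map_smul, LinearMap.smul_apply, smul_eq_mul, smul_eq_mul,
    ← sub_eq_zero, ← sub_mul] at h
  exact (mul_eq_zero.mp h).resolve_left (sub_ne_zero.mpr (L.θ_inj.ne hrs))

theorem form_eq_sum_basisA (x y : V) :
    L.form x y
      = ∑ r, L.basisA.repr x r * L.basisA.repr y r * L.form (L.basisA r) (L.basisA r) := by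
  conv_lhs => rw [← Matrix.toBilin_toMatrix L.basisA L.form, Matrix.toBilin_apply]
  refine Finset.sum_congr rfl fun r _ => ?_
  rw [Finset.sum_eq_single r (fun s _ hsr => by
    rw [LinearMap.BilinForm.toMatrix_apply, L.form_basisA_basisA_of_ne hsr.symm, mul_zero,
      zero_mul])
    (by simp), LinearMap.BilinForm.toMatrix_apply]
  ring

theorem basisA_repr_eta_apply (i : ℕ) (x : V) (r : Fin (d+1)) :
    L.basisA.repr (L.eta i x) r = (etaP d L.θ i).eval (L.θ r) * L.basisA.repr x r :=
  L.basisA_repr_aeval _ x r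

theorem As_eta_apply_ξ {i : ℕ} (h1 : 1 ≤ i) (h2 : i ≤ d) :
    L.As (L.eta i L.ξ)
      = L.θs ⟨i, by omega⟩ • L.eta i L.ξ + L.ϕ i • L.eta (i-1) L.ξ := by
  have h := L.reverse.As_tau_apply_ξ h1 h2
  rw [L.reverse_tau h2, L.reverse_tau (by omega), L.reverse_φ] at h
  exact h

theorem form_eta_tau_eq_zero {i j : ℕ} (hi : i ≤ d) (hij : d < i + j) :
    L.form (L.eta i L.ξ) (L.tau j L.ξ) = 0 := by
  rw [form_eq_sum_basisA]
  refine Finset.sum_eq_zero fun s _ => ?_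
  rw [L.basisA_repr_eta_apply, L.basisA_repr_tau_apply]
  by_cases hs : (s : ℕ) < j
  · rw [eval_tauP_eq_zero _ hs]; ring
  · rw [eval_etaP_eq_zero _ (by omega : d - i < (s : ℕ))]; ring

theorem form_eta_tau_self (r : Fin (d+1)) :
    L.form (L.eta (d - r) L.ξ) (L.tau r L.ξ)
      = (∏ k ∈ Finset.univ.erase r, (L.θ r - L.θ k))
        * (L.basisA.repr L.ξ r ^ 2 * L.form (L.basisA r) (L.basisA r)) := by
  rw [form_eq_sum_basisA, Finset.sum_eq_single r, L.basisA_repr_eta_apply,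
    L.basisA_repr_tau_apply, ← eval_tauP_mul_eval_etaP]
  · ring
  · intro s _ hsr
    rw [L.basisA_repr_eta_apply, L.basisA_repr_tau_apply]
    rcases lt_or_gt_of_ne hsr with hs | hs
    · rw [eval_tauP_eq_zero _ hs]; ring
    · rw [eval_etaP_eq_zero _ (by rw [Fin.lt_def] at hs; omega)]; ring
  · simp

/-- Compare `⟨A* η_{d+1-j}(A) ξ, τ_j(A) ξ⟩` with `⟨η_{d+1-j}(A) ξ, A* τ_j(A) ξ⟩`. -/
theorem ϕ_mul_form_eta_tau {j : ℕ} (h1 : 1 ≤ j) (h2 : j ≤ d) :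
    L.ϕ (d + 1 - j) * L.form (L.eta (d - j) L.ξ) (L.tau j L.ξ)
      = L.φ j * L.form (L.eta (d + 1 - j) L.ξ) (L.tau (j - 1) L.ξ) := by
  have h := L.form_As (L.eta (d + 1 - j) L.ξ) (L.tau j L.ξ)
  rw [L.As_eta_apply_ξ (by omega) (by omega), L.As_tau_apply_ξ h1 h2,
    show d + 1 - j - 1 = d - j by omega] at h
  simp only [map_add, map_smul, LinearMap.add_apply, LinearMap.smul_apply, smul_eq_mul,
    L.form_eta_tau_eq_zero (by omega) (show d < d + 1 - j + j by omega), mul_zero, zero_add] at h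
  exact h

theorem form_eta_tau_mul_prod_ϕ {r : ℕ} (hr : r ≤ d) :
    L.form (L.eta (d - r) L.ξ) (L.tau r L.ξ) * ∏ k ∈ Finset.Icc (d - r + 1) d, L.ϕ k
      = L.form (L.eta d L.ξ) (L.tau 0 L.ξ) * ∏ k ∈ Finset.Icc 1 r, L.φ k := by
  induction r with
  | zero => simp
  | succ r ih =>
    have hstep := L.ϕ_mul_form_eta_tau (j := r + 1) (by omega) hr
    rw [show d + 1 - (r + 1) = d - r by omega, Nat.add_sub_cancel] at hstep
    rw [show d - (r + 1) + 1 = d - r by omega,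
      ← Finset.insert_Icc_add_one_left_eq_Icc (by omega : d - r ≤ d),
      Finset.prod_insert (by simp), Finset.prod_Icc_succ_top (by omega)]
    linear_combination
      (∏ k ∈ Finset.Icc (d - r + 1) d, L.ϕ k) * hstep + L.φ (r + 1) * ih (by omega)

noncomputable def switchingCoeff (r : Fin (d+1)) : K :=
  (∏ k ∈ Finset.Icc (d - (r : ℕ) + 1) d, L.ϕ k) / ∏ k ∈ Finset.Icc 1 (r : ℕ), L.φ k

theorem basisA_repr_S_apply (x : V) (r : Fin (d+1)) :
    L.basisA.repr (L.S x) r = L.switchingCoeff r * L.basisA.repr x r := by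
  rw [S, LinearMap.sum_apply, map_sum, Finset.sum_apply', Finset.sum_eq_single r]
  · simp [E_apply, switchingCoeff]
  · intro s _ hsr
    simp [E_apply, hsr]
  · simp

theorem switchingCoeff_mul_form_eta_tau (r : Fin (d+1)) :
    L.switchingCoeff r * L.form (L.eta (d - r) L.ξ) (L.tau r L.ξ)
      = L.form (L.eta d L.ξ) (L.tau 0 L.ξ) := by
  have hΨ : ∏ k ∈ Finset.Icc 1 (r : ℕ), L.φ k ≠ 0 :=
    Finset.prod_ne_zero_iff.mpr fun k hk => by
      rw [Finset.mem_Icc] at hk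
      exact L.φ_ne_zero hk.1 (by omega)
  rw [switchingCoeff, div_mul_eq_mul_div, div_eq_iff hΨ, mul_comm,
    L.form_eta_tau_mul_prod_ϕ (by omega)]

/-- `switchingCoeff r * ⟨E_r ξ, E_r ξ⟩` is proportional to `1 / ∏_{k ≠ r} (θ_r - θ_k)`, and
these weights annihilate the polynomials of degree `< d` (Lagrange interpolation). -/
theorem form_aeval_ξ_S_apply_ξ {g : K[X]} (hg : g.degree < d) :
    L.form (aeval L.A g L.ξ) (L.S L.ξ) = 0 := by
  have hπ : ∀ r : Fin (d+1), ∏ k ∈ Finset.univ.erase r, (L.θ r - L.θ k) ≠ 0 := fun r =>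
    Finset.prod_ne_zero_iff.mpr fun k hk =>
      sub_ne_zero.mpr (L.θ_inj.ne (Finset.ne_of_mem_erase hk).symm)
  calc L.form (aeval L.A g L.ξ) (L.S L.ξ)
      = L.form (L.eta d L.ξ) (L.tau 0 L.ξ)
          * ∑ r, g.eval (L.θ r) / ∏ k ∈ Finset.univ.erase r, (L.θ r - L.θ k) := by
        rw [form_eq_sum_basisA, Finset.mul_sum]
        refine Finset.sum_congr rfl fun r _ => ?_
        rw [← L.switchingCoeff_mul_form_eta_tau r, form_eta_tau_self, L.basisA_repr_aeval,
          basisA_repr_S_apply]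
        field_simp [hπ r]
    _ = 0 := by rw [sum_eval_div_prod_sub_eq_zero L.θ_inj hg, mul_zero]

theorem S_apply_ξ_mem : L.S L.ξ ∈ K ∙ L.ζ := by
  refine Submodule.mem_span_singleton.mpr ⟨L.basisAs.repr (L.S L.ξ) (Fin.last d),
    L.basisAs.ext_elem fun j => ?_⟩
  by_cases hj : j = Fin.last d
  · simp [ζ, hj]
  obtain ⟨g, hg, hgj⟩ := L.exists_aeval_ξ_eq_basisAs j
  have h := L.form_aeval_ξ_S_apply_ξ (g := g) ((mem_degreeLT.mp hg).trans_le
    (by exact_mod_cast Fin.val_lt_last hj))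
  rw [hgj, form_basisAs_left, mul_eq_zero, or_iff_right (L.κ_ne_zero j)] at h
  simp [ζ, h, Ne.symm hj]

theorem S_apply_ξ_ne_zero : L.S L.ξ ≠ 0 := by
  intro h
  have h0 := L.basisA_repr_S_apply L.ξ 0
  simp [h, switchingCoeff] at h0
  exact L.basisA_repr_ξ_ne_zero 0 h0.symm

theorem span_S_apply_ξ : K ∙ L.S L.ξ = K ∙ L.ζ := by
  obtain ⟨t, ht⟩ := Submodule.mem_span_singleton.mp L.S_apply_ξ_mem
  have htne : t ≠ 0 := by
    rintro rfl
    exact L.S_apply_ξ_ne_zero (by rw [← ht, zero_smul])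
  rw [← ht, Submodule.span_singleton_smul_eq (isUnit_iff_ne_zero.mpr htne)]

theorem S_mem_adjoin : L.S ∈ Algebra.adjoin K {L.A} :=
  Subalgebra.sum_mem _ fun _ _ => Subalgebra.smul_mem _ (aeval_mem_adjoin_singleton K L.A) _

theorem eq_of_mem_adjoin_of_apply_ξ_eq {Y Z : Module.End K V} (hY : Y ∈ Algebra.adjoin K {L.A})
    (hZ : Z ∈ Algebra.adjoin K {L.A}) (h : Y L.ξ = Z L.ξ) : Y = Z := by
  obtain ⟨g, hg⟩ : ∃ g : K[X], aeval L.A g = Y - Z := by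
    rw [← AlgHom.mem_range, ← Algebra.adjoin_singleton_eq_range_aeval]
    exact Subalgebra.sub_mem _ hY hZ
  rw [← sub_eq_zero, ← hg]
  exact L.aeval_eq_zero_of_aeval_apply_ξ_eq_zero (by rw [hg, LinearMap.sub_apply, h, sub_self])

end LeonardSystem

/-- a nonzero `X` is a scalar multiple of `S` iff `X` is in the subalgebra
generated by `A` and `X E*_0 V ⊆ E*_d V`; in that case `X E*_0 V = E*_d V`. -/
theorem LeonardSystem.S_characterization {K : Type} [Field K] {V : Type}
    [AddCommGroup V] [Module K V] {d : ℕ} (L : LeonardSystem K V d)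
    (Xop : Module.End K V) (hX : Xop ≠ 0) :
    ((∃ c : K, Xop = c • L.S) ↔
      (Xop ∈ Algebra.adjoin K {L.A} ∧
        Submodule.map Xop (LinearMap.range (L.Es 0)) ≤ LinearMap.range (L.Es (Fin.last d)))) ∧
    ((∃ c : K, Xop = c • L.S) →
      Submodule.map Xop (LinearMap.range (L.Es 0)) = LinearMap.range (L.Es (Fin.last d))) := by
  have hmap : Submodule.map Xop (LinearMap.range (L.Es 0)) = K ∙ Xop L.ξ := by
    rw [L.range_Es, Submodule.map_span, Set.image_singleton, ξ]
  rw [hmap, L.range_Es, ← ζ, Submodule.span_singleton_le_iff_mem]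
  refine ⟨⟨?_, fun ⟨hXD, hXξ⟩ => ?_⟩, ?_⟩
  · rintro ⟨c, rfl⟩
    refine ⟨Subalgebra.smul_mem _ L.S_mem_adjoin c, ?_⟩
    rw [← L.span_S_apply_ξ, LinearMap.smul_apply]
    exact Submodule.smul_mem _ c (Submodule.mem_span_singleton_self _)
  · rw [← L.span_S_apply_ξ, Submodule.mem_span_singleton] at hXξ
    obtain ⟨c, hc⟩ := hXξ
    exact ⟨c, L.eq_of_mem_adjoin_of_apply_ξ_eq hXD (Subalgebra.smul_mem _ L.S_mem_adjoin c)
      hc.symm⟩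
  · rintro ⟨c, rfl⟩
    have hc : c ≠ 0 := by
      rintro rfl
      exact hX (zero_smul _ _)
    rw [LinearMap.smul_apply, Submodule.span_singleton_smul_eq (isUnit_iff_ne_zero.mpr hc),
      L.span_S_apply_ξ]
end

section
/- Let A, A* be the (d+1)×(d+1) matrices over a field K with A lower bidiagonal having diagonal entries θ_0,...,θ_d and subdiagonal entries all 1, and A* upper bidiagonal with diagonal entries θ*_0,...,θ*_d and superdiagonal entries φ_1,...,φ_d, where the θ_i are mutually distinct, the θ*_i are mutually distinct, and each φ_i ≠ 0. Suppose there exists an invertible matrix X and nonzero scalars ϕ_1,...,ϕ_d such that X^{-1}AX = A and X^{-1}A*X is upper bidiagonal with diagonal entries θ*_d, θ*_{d-1},...,θ*_0 and superdiagonal entries ϕ_d, ϕ_{d-1},...,ϕ_1. Then A, A* is a Leonard pair. -/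
open Polynomial

/-- A square matrix is irreducible tridiagonal: entries vanish off the three central
diagonals, and all subdiagonal and superdiagonal entries are nonzero. -/
def Matrix.IsIrredTridiagonal {K : Type} [Field K] {n : ℕ}
    (M : Matrix (Fin n) (Fin n) K) : Prop :=
  (∀ i j : Fin n, ((i:ℕ) + 1 < (j:ℕ) ∨ (j:ℕ) + 1 < (i:ℕ)) → M i j = 0) ∧
  (∀ i j : Fin n, ((i:ℕ) + 1 = (j:ℕ) ∨ (j:ℕ) + 1 = (i:ℕ)) → M i j ≠ 0)

/-- A pair of matrices is a Leonard pair: in some basis the first is irreducible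
tridiagonal and the second diagonal, and in some basis the second is irreducible
tridiagonal and the first diagonal. -/
def Matrix.IsLeonardPair {K : Type} [Field K] {n : ℕ}
    (A As : Matrix (Fin n) (Fin n) K) : Prop :=
  (∃ P : Matrix (Fin n) (Fin n) K, IsUnit P ∧
    (P⁻¹ * A * P).IsIrredTridiagonal ∧ (P⁻¹ * As * P).IsDiag) ∧
  (∃ Q : Matrix (Fin n) (Fin n) K, IsUnit Q ∧
    (Q⁻¹ * As * Q).IsIrredTridiagonal ∧ (Q⁻¹ * A * Q).IsDiag)

open Matrix

namespace LPAux





variable {K : Type} [Field K] {n : ℕ}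

/-- An upper triangular matrix with distinct diagonal entries is diagonalized by a
unit upper triangular matrix. -/
lemma exists_unit_upper_diagonalizer (M : Matrix (Fin n) (Fin n) K)
    (htri : ∀ i j : Fin n, j < i → M i j = 0)
    (hdist : ∀ i j : Fin n, i ≠ j → M i i ≠ M j j) :
    ∃ Q : Matrix (Fin n) (Fin n) K,
      (∀ i j : Fin n, j < i → Q i j = 0) ∧ (∀ i, Q i i = 1) ∧
      M * Q = Q * Matrix.diagonal (fun i => M i i) := by
  classical
  set v : Fin n → Fin n → K := fun i k => if k = i then 1 - M i i else - M i i with hv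
  set G : Fin n → Matrix (Fin n) (Fin n) K := fun i => M + Matrix.diagonal (v i) with hG
  have hGtri : ∀ i a b : Fin n, b < a → (G i) a b = 0 := by
    intro i a b hba
    have h1 : Matrix.diagonal (v i) a b = 0 := Matrix.diagonal_apply_ne _ (ne_of_gt hba)
    simp only [hG, Matrix.add_apply, htri a b hba, h1, zero_add]
  have hGbt : ∀ i, (G i).BlockTriangular id := fun i a b hba => hGtri i a b hba
  have hGdiag : ∀ i k, (G i) k k = if k = i then 1 else M k k - M i i := by
    intro i k
    simp only [hG, Matrix.add_apply, Matrix.diagonal_apply_eq, hv]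
    split_ifs with h
    · subst h; ring
    · ring
  have hGdet : ∀ i, IsUnit (G i).det := by
    intro i
    rw [Matrix.det_of_upperTriangular (hGbt i), isUnit_iff_ne_zero]
    apply Finset.prod_ne_zero_iff.mpr
    intro k _
    rw [hGdiag]
    split_ifs with h
    · exact one_ne_zero
    · exact sub_ne_zero_of_ne (hdist k i h)
  have hGinv : ∀ i, Invertible (G i) := fun i => (G i).invertibleOfIsUnitDet (hGdet i)
  have hGinvtri : ∀ i a b : Fin n, b < a → (G i)⁻¹ a b = 0 := by
    intro i a b hba
    haveI := hGinv i
    exact Matrix.blockTriangular_inv_of_blockTriangular (hGbt i) (show id b < id a from hba)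
  have hQdiag : ∀ i : Fin n, (G i)⁻¹ i i = 1 := by
    intro i
    haveI := hGinv i
    have h1 : ((G i)⁻¹ * (G i)) i i = 1 := by
      rw [Matrix.nonsing_inv_mul _ (hGdet i)]; simp
    rw [Matrix.mul_apply] at h1
    rw [Finset.sum_eq_single i (fun k _ hk => ?_) (by simp)] at h1
    · have h2 := hGdiag i i
      rw [if_pos rfl] at h2
      rw [h2, mul_one] at h1
      exact h1
    · rcases lt_or_gt_of_ne hk with h | h
      · rw [hGinvtri i i k h, zero_mul]
      · rw [hGtri i k i h, mul_zero]
  refine ⟨Matrix.of fun k i => (G i)⁻¹ k i, fun i j hji => hGinvtri j i j hji, hQdiag, ?_⟩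
  ext k j
  haveI := hGinv j
  have hexp : M * (G j)⁻¹ = 1 - Matrix.diagonal (v j) * (G j)⁻¹ := by
    have hM : M = G j - Matrix.diagonal (v j) := by
      rw [hG]; simp
    conv_lhs => rw [hM]
    rw [Matrix.sub_mul, Matrix.mul_nonsing_inv _ (hGdet j)]
  have hMQ : (M * (G j)⁻¹) k j = (if k = j then 1 else 0) - v j k * (G j)⁻¹ k j := by
    rw [hexp, Matrix.sub_apply, Matrix.diagonal_mul, Matrix.one_apply]
  have lhs_eq : (M * (Matrix.of fun k i => (G i)⁻¹ k i)) k j = (M * (G j)⁻¹) k j := by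
    rw [Matrix.mul_apply, Matrix.mul_apply]; rfl
  have rhs_eq : ((Matrix.of fun k i => (G i)⁻¹ k i) * Matrix.diagonal (fun i => M i i)) k j
      = (G j)⁻¹ k j * M j j := by
    rw [Matrix.mul_apply, Finset.sum_eq_single j]
    · simp
    · intro l _ hl; simp [Matrix.diagonal_apply_ne _ hl]
    · simp
  rw [lhs_eq, rhs_eq, hMQ]
  have hvjk : v j k = if k = j then 1 - M j j else - M j j := rfl
  rw [hvjk]
  by_cases h : k = j
  · subst h; rw [if_pos rfl, if_pos rfl, hQdiag k]; ring
  · rw [if_neg h, if_neg h]; ring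








/-- If `Qu` is unit upper triangular and `Qu * M = B * Qu` with `B` lower bidiagonal
(diagonal `β`, subdiagonal `γ`), then `M` vanishes below the subdiagonal and has
subdiagonal entries `γ`. -/
lemma lleft (Qu M B : Matrix (Fin n) (Fin n) K) (β γ : Fin n → K)
    (hQtri : ∀ i j : Fin n, j < i → Qu i j = 0) (hQdiag : ∀ i, Qu i i = 1)
    (hB : ∀ i j : Fin n, B i j = if i = j then β i else if (j:ℕ)+1 = (i:ℕ) then γ i else 0)
    (heq : Qu * M = B * Qu) :
    (∀ i j : Fin n, (j:ℕ)+1 < (i:ℕ) → M i j = 0) ∧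
    (∀ i j : Fin n, (j:ℕ)+1 = (i:ℕ) → M i j = γ i) := by
  classical
  have hBQ : ∀ i j : Fin n, (j:ℕ)+1 < (i:ℕ) → (B * Qu) i j = 0 := by
    intro i j hij
    rw [Matrix.mul_apply]
    apply Finset.sum_eq_zero
    intro k _
    rw [hB]
    by_cases h1 : i = k
    · subst h1
      rw [if_pos rfl, hQtri i j (Fin.lt_def.mpr (by omega)), mul_zero]
    · rw [if_neg h1]
      by_cases h2 : (k:ℕ)+1 = (i:ℕ)
      · rw [if_pos h2, hQtri k j (Fin.lt_def.mpr (by omega)), mul_zero]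
      · rw [if_neg h2, zero_mul]
  have hzero : ∀ m : ℕ, ∀ i j : Fin n, n - (i:ℕ) = m → (j:ℕ)+1 < (i:ℕ) → M i j = 0 := by
    intro m
    induction m using Nat.strong_induction_on with
    | _ m IH =>
      intro i j him hij
      have hQM : (Qu * M) i j = M i j := by
        rw [Matrix.mul_apply]
        rw [Finset.sum_eq_single i (fun k _ hk => ?_) (by simp)]
        · rw [hQdiag, one_mul]
        · rcases lt_or_gt_of_ne hk with h | h
          · rw [hQtri i k h, zero_mul]
          · rw [IH (n - (k:ℕ)) (by have := i.isLt; have := k.isLt; omega) k j rfl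
              (by have hki : (i:ℕ) < (k:ℕ) := h; omega), mul_zero]
      rw [← hQM, heq]
      exact hBQ i j hij
  refine ⟨fun i j => hzero (n - (i:ℕ)) i j rfl, fun i j hij => ?_⟩
  have hQM : (Qu * M) i j = M i j := by
    rw [Matrix.mul_apply]
    rw [Finset.sum_eq_single i (fun k _ hk => ?_) (by simp)]
    · rw [hQdiag, one_mul]
    · rcases lt_or_gt_of_ne hk with h | h
      · rw [hQtri i k h, zero_mul]
      · rw [hzero (n - (k:ℕ)) k j rfl (by have hki : (i:ℕ) < (k:ℕ) := h; omega), mul_zero]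
  have hBQ1 : (B * Qu) i j = γ i := by
    rw [Matrix.mul_apply]
    rw [Finset.sum_eq_single j (fun k _ hk => ?_) (by simp)]
    · rw [hB, if_neg (by intro h; subst h; omega), if_pos hij, hQdiag, mul_one]
    · rw [hB]
      by_cases h1 : i = k
      · subst h1
        rw [if_pos rfl, hQtri i j (Fin.lt_def.mpr (by omega)), mul_zero]
      · rw [if_neg h1]
        by_cases h2 : (k:ℕ)+1 = (i:ℕ)
        · exact absurd (Fin.ext (by omega) : k = j) hk
        · rw [if_neg h2, zero_mul]
  rw [← hQM, heq, hBQ1]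

/-- If `Qu` is unit upper triangular and `M * Qu = Qu * B` with `B` lower bidiagonal
(diagonal `β`, subdiagonal `γ`), then `M` vanishes below the subdiagonal and has
subdiagonal entries `γ`. -/
lemma lright (Qu M B : Matrix (Fin n) (Fin n) K) (β γ : Fin n → K)
    (hQtri : ∀ i j : Fin n, j < i → Qu i j = 0) (hQdiag : ∀ i, Qu i i = 1)
    (hB : ∀ i j : Fin n, B i j = if i = j then β i else if (j:ℕ)+1 = (i:ℕ) then γ i else 0)
    (heq : M * Qu = Qu * B) :
    (∀ i j : Fin n, (j:ℕ)+1 < (i:ℕ) → M i j = 0) ∧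
    (∀ i j : Fin n, (j:ℕ)+1 = (i:ℕ) → M i j = γ i) := by
  classical
  have hQB : ∀ i j : Fin n, (j:ℕ)+1 < (i:ℕ) → (Qu * B) i j = 0 := by
    intro i j hij
    rw [Matrix.mul_apply]
    apply Finset.sum_eq_zero
    intro k _
    rw [hB]
    by_cases h1 : k = j
    · subst h1
      rw [if_pos rfl, hQtri i k (Fin.lt_def.mpr (by omega)), zero_mul]
    · rw [if_neg h1]
      by_cases h2 : (j:ℕ)+1 = (k:ℕ)
      · rw [if_pos h2, hQtri i k (Fin.lt_def.mpr (by omega)), zero_mul]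
      · rw [if_neg h2, mul_zero]
  have hzero : ∀ m : ℕ, ∀ i j : Fin n, (j:ℕ) = m → (j:ℕ)+1 < (i:ℕ) → M i j = 0 := by
    intro m
    induction m using Nat.strong_induction_on with
    | _ m IH =>
      intro i j hjm hij
      have hMQ : (M * Qu) i j = M i j := by
        rw [Matrix.mul_apply]
        rw [Finset.sum_eq_single j (fun k _ hk => ?_) (by simp)]
        · rw [hQdiag, mul_one]
        · rcases lt_or_gt_of_ne hk with h | h
          · rw [IH (k:ℕ) (by have hkj : (k:ℕ) < (j:ℕ) := h; omega) i k rfl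
              (by have hkj : (k:ℕ) < (j:ℕ) := h; omega), zero_mul]
          · rw [hQtri k j h, mul_zero]
      rw [← hMQ, heq]
      exact hQB i j hij
  refine ⟨fun i j => hzero (j:ℕ) i j rfl, fun i j hij => ?_⟩
  have hMQ : (M * Qu) i j = M i j := by
    rw [Matrix.mul_apply]
    rw [Finset.sum_eq_single j (fun k _ hk => ?_) (by simp)]
    · rw [hQdiag, mul_one]
    · rcases lt_or_gt_of_ne hk with h | h
      · rw [hzero (k:ℕ) i k rfl (by have hkj : (k:ℕ) < (j:ℕ) := h; omega), zero_mul]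
      · rw [hQtri k j h, mul_zero]
  have hQB1 : (Qu * B) i j = γ i := by
    rw [Matrix.mul_apply]
    rw [Finset.sum_eq_single i (fun k _ hk => ?_) (by simp)]
    · rw [hB, if_neg (by intro h; subst h; omega), if_pos hij, hQdiag, one_mul]
    · rw [hB]
      by_cases h1 : k = j
      · subst h1
        rw [if_pos rfl, hQtri i k (Fin.lt_def.mpr (by omega)), zero_mul]
      · rw [if_neg h1]
        by_cases h2 : (j:ℕ)+1 = (k:ℕ)
        · exact absurd (Fin.ext (by omega) : k = i) hk
        · rw [if_neg h2, mul_zero]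
  rw [← hMQ, heq, hQB1]

/-- The order-reversal permutation matrix. -/
def Zm (K : Type) [Field K] (n : ℕ) : Matrix (Fin n) (Fin n) K :=
  Matrix.of fun i j => if i = Fin.rev j then 1 else 0

lemma Zm_mul_apply (M : Matrix (Fin n) (Fin n) K) (i j : Fin n) :
    (Zm K n * M) i j = M (Fin.rev i) j := by
  rw [Matrix.mul_apply]
  rw [Finset.sum_eq_single (Fin.rev i) (fun k _ hk => ?_) (by simp)]
  · rw [Zm, Matrix.of_apply, if_pos (by rw [Fin.rev_rev]), one_mul]
  · rw [Zm, Matrix.of_apply, if_neg (fun h => hk (by rw [h, Fin.rev_rev])), zero_mul]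

lemma mul_Zm_apply (M : Matrix (Fin n) (Fin n) K) (i j : Fin n) :
    (M * Zm K n) i j = M i (Fin.rev j) := by
  rw [Matrix.mul_apply]
  rw [Finset.sum_eq_single (Fin.rev j) (fun k _ hk => ?_) (by simp)]
  · rw [Zm, Matrix.of_apply, if_pos rfl, mul_one]
  · rw [Zm, Matrix.of_apply, if_neg hk, mul_zero]

lemma Zm_mul_Zm : Zm K n * Zm K n = 1 := by
  ext i j
  rw [Zm_mul_apply, Zm, Matrix.of_apply, Matrix.one_apply]
  by_cases h : i = j
  · subst h; simp [Fin.rev_rev]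
  · rw [if_neg h, if_neg (fun hc => h (by rw [← Fin.rev_rev i, hc, Fin.rev_rev]))]

lemma isUnit_Zm : IsUnit (Zm K n) :=
  ⟨⟨Zm K n, Zm K n, Zm_mul_Zm, Zm_mul_Zm⟩, rfl⟩

lemma Zm_conj_apply (M : Matrix (Fin n) (Fin n) K) (i j : Fin n) :
    (Zm K n * M * Zm K n) i j = M (Fin.rev i) (Fin.rev j) := by
  rw [mul_Zm_apply, Zm_mul_apply]

lemma Zm_conj_diagonal (f : Fin n → K) :
    Zm K n * Matrix.diagonal f * Zm K n = Matrix.diagonal (fun i => f (Fin.rev i)) := by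
  ext i j
  rw [Zm_conj_apply]
  by_cases h : i = j
  · subst h; simp
  · rw [Matrix.diagonal_apply_ne _ (fun hc => h (by rw [← Fin.rev_rev i, hc, Fin.rev_rev])),
      Matrix.diagonal_apply_ne _ h]








lemma isUnit_of_unit_upper (Q : Matrix (Fin n) (Fin n) K)
    (htri : ∀ i j : Fin n, j < i → Q i j = 0) (hdiag : ∀ i, Q i i = 1) : IsUnit Q := by
  rw [Matrix.isUnit_iff_isUnit_det,
    Matrix.det_of_upperTriangular (fun i j h => htri i j h)]
  simp [hdiag]

lemma isUnit_of_unit_lower (Q : Matrix (Fin n) (Fin n) K)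
    (htri : ∀ i j : Fin n, i < j → Q i j = 0) (hdiag : ∀ i, Q i i = 1) : IsUnit Q := by
  rw [Matrix.isUnit_iff_isUnit_det,
    Matrix.det_of_lowerTriangular Q (fun i j h => htri i j h)]
  simp [hdiag]

lemma isUnit_inv_of_isUnit (M : Matrix (Fin n) (Fin n) K) (h : IsUnit M) : IsUnit M⁻¹ := by
  have hd := (Matrix.isUnit_iff_isUnit_det M).mp h
  exact ⟨⟨M⁻¹, M, Matrix.nonsing_inv_mul _ hd, Matrix.mul_nonsing_inv _ hd⟩, rfl⟩

lemma offdiag_zero_of_comm_diagonal (H : Matrix (Fin n) (Fin n) K) (f : Fin n → K)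
    (hcomm : H * Matrix.diagonal f = Matrix.diagonal f * H)
    (hf : ∀ i j : Fin n, i ≠ j → f i ≠ f j) :
    ∀ i j : Fin n, i ≠ j → H i j = 0 := by
  intro i j hij
  have h1 : (H * Matrix.diagonal f) i j = H i j * f j := Matrix.mul_diagonal _ _ _ _
  have h2 : (Matrix.diagonal f * H) i j = f i * H i j := Matrix.diagonal_mul _ _ _ _
  have h3 : H i j * f j = f i * H i j := by rw [← h1, ← h2, hcomm]
  have h4 : H i j * (f j - f i) = 0 := by ring_nf; linear_combination h3
  rcases mul_eq_zero.mp h4 with h | h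
  · exact h
  · exact absurd (sub_eq_zero.mp h) (hf j i (Ne.symm hij))

lemma diag_ne_zero_of_isUnit (H : Matrix (Fin n) (Fin n) K)
    (hoff : ∀ i j : Fin n, i ≠ j → H i j = 0) (hu : IsUnit H) : ∀ i, H i i ≠ 0 := by
  have hd := (Matrix.isUnit_iff_isUnit_det H).mp hu
  rw [Matrix.det_of_upperTriangular (fun i j h => hoff i j (ne_of_gt h)),
    isUnit_iff_ne_zero] at hd
  intro i
  exact Finset.prod_ne_zero_iff.mp hd i (Finset.mem_univ i)

lemma mul_apply_of_offdiag_zero_left (G M : Matrix (Fin n) (Fin n) K)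
    (hoff : ∀ i j : Fin n, i ≠ j → G i j = 0) (i j : Fin n) :
    (G * M) i j = G i i * M i j := by
  rw [Matrix.mul_apply]
  exact Finset.sum_eq_single i (fun k _ hk => by rw [hoff i k (Ne.symm hk), zero_mul])
    (by simp)

lemma mul_apply_of_offdiag_zero_right (G M : Matrix (Fin n) (Fin n) K)
    (hoff : ∀ i j : Fin n, i ≠ j → G i j = 0) (i j : Fin n) :
    (M * G) i j = M i j * G j j := by
  rw [Matrix.mul_apply]
  exact Finset.sum_eq_single j (fun k _ hk => by rw [hoff k j hk, mul_zero]) (by simp)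

lemma diag_rev_mul_Zm (f : Fin n → K) :
    Matrix.diagonal (fun i => f (Fin.rev i)) * Zm K n = Zm K n * Matrix.diagonal f := by
  ext i j
  rw [mul_Zm_apply, Zm_mul_apply]
  by_cases h : i = Fin.rev j
  · subst h
    rw [Matrix.diagonal_apply_eq, Fin.rev_rev, Matrix.diagonal_apply_eq]
  · rw [Matrix.diagonal_apply_ne _ h,
      Matrix.diagonal_apply_ne _ (fun hc => h (by rw [← hc, Fin.rev_rev]))]



end LPAux

/-- if `X⁻¹ A X = A` and `X⁻¹ A* X` is the "second split form" upper
bidiagonal matrix, then `A, A*` is a Leonard pair. -/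
theorem isLeonardPair_of_switching {K : Type} [Field K] {d : ℕ}
    (A As Xm : Matrix (Fin (d+1)) (Fin (d+1)) K)
    (θ θs φ ϕ : Fin (d+1) → K)
    (hθ : Function.Injective θ) (hθs : Function.Injective θs)
    (hφ : ∀ j : Fin (d+1), j ≠ 0 → φ j ≠ 0)
    (hϕ : ∀ j : Fin (d+1), j ≠ 0 → ϕ j ≠ 0)
    (hA : ∀ i j : Fin (d+1), A i j =
      if i = j then θ i else if (j:ℕ) + 1 = (i:ℕ) then 1 else 0)
    (hAs : ∀ i j : Fin (d+1), As i j =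
      if i = j then θs i else if (i:ℕ) + 1 = (j:ℕ) then φ j else 0)
    (hXunit : IsUnit Xm)
    (hXA : Xm⁻¹ * A * Xm = A)
    (hXAs : ∀ i j : Fin (d+1), (Xm⁻¹ * As * Xm) i j =
      if i = j then θs (Fin.rev i)
      else if (i:ℕ) + 1 = (j:ℕ) then ϕ (Fin.rev i) else 0) :
    Matrix.IsLeonardPair A As := by
  classical
  have hθne : ∀ i j : Fin (d+1), i ≠ j → θ i ≠ θ j := fun i j h hc => h (hθ hc)
  have hθsne : ∀ i j : Fin (d+1), i ≠ j → θs i ≠ θs j := fun i j h hc => h (hθs hc)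
  have hXdet : IsUnit Xm.det := (Matrix.isUnit_iff_isUnit_det Xm).mp hXunit
  have hXX : Xm * Xm⁻¹ = 1 := Matrix.mul_nonsing_inv _ hXdet
  -- A commutes with X
  have hAX : A * Xm = Xm * A := by
    have h1 : Xm * (Xm⁻¹ * A * Xm) = Xm * A := by rw [hXA]
    calc A * Xm = (Xm * Xm⁻¹) * A * Xm := by rw [hXX, Matrix.one_mul]
    _ = Xm * (Xm⁻¹ * A * Xm) := by simp only [Matrix.mul_assoc]
    _ = Xm * A := h1
  -- the second split form matrix
  set A₂ : Matrix (Fin (d+1)) (Fin (d+1)) K := Matrix.of (fun i j =>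
    if i = j then θs (Fin.rev i) else if (i:ℕ) + 1 = (j:ℕ) then ϕ (Fin.rev i) else 0)
    with hA₂def
  have hA₂ : Xm⁻¹ * As * Xm = A₂ := by
    ext i j; rw [hXAs i j]; rfl
  have hAsX : As * Xm = Xm * A₂ := by
    have h1 : Xm * (Xm⁻¹ * As * Xm) = Xm * A₂ := by rw [hA₂]
    calc As * Xm = (Xm * Xm⁻¹) * As * Xm := by rw [hXX, Matrix.one_mul]
    _ = Xm * (Xm⁻¹ * As * Xm) := by simp only [Matrix.mul_assoc]
    _ = Xm * A₂ := h1
  -- diagonalizer of As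
  obtain ⟨Q, hQtri, hQdiag, hQeq0⟩ := LPAux.exists_unit_upper_diagonalizer As
    (fun i j hji => by
      rw [hAs, if_neg (ne_of_gt hji), if_neg (by
        have := Fin.lt_def.mp hji; omega)])
    (fun i j hij => by
      rw [hAs i i, if_pos rfl, hAs j j, if_pos rfl]; exact hθsne i j hij)
  have hAsdiag : (fun i => As i i) = θs := funext fun i => by rw [hAs, if_pos rfl]
  rw [hAsdiag] at hQeq0
  set Ds : Matrix (Fin (d+1)) (Fin (d+1)) K := Matrix.diagonal θs with hDsdef
  set Dθ : Matrix (Fin (d+1)) (Fin (d+1)) K := Matrix.diagonal θ with hDθdef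
  have hQeq : As * Q = Q * Ds := hQeq0
  have hQunit : IsUnit Q := LPAux.isUnit_of_unit_upper Q hQtri hQdiag
  have hQdet : IsUnit Q.det := (Matrix.isUnit_iff_isUnit_det Q).mp hQunit
  have hQl : Q⁻¹ * Q = 1 := Matrix.nonsing_inv_mul _ hQdet
  have hQr : Q * Q⁻¹ = 1 := Matrix.mul_nonsing_inv _ hQdet
  -- diagonalizer of A₂
  obtain ⟨Q₂, hQ₂tri, hQ₂diag, hQ₂eq0⟩ := LPAux.exists_unit_upper_diagonalizer A₂
    (fun i j hji => by
      show (if i = j then θs (Fin.rev i) else if (i:ℕ) + 1 = (j:ℕ) then ϕ (Fin.rev i) else 0) = 0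
      rw [if_neg (ne_of_gt hji), if_neg (by
        have := Fin.lt_def.mp hji; omega)])
    (fun i j hij => by
      show (if i = i then θs (Fin.rev i) else _) ≠ (if j = j then θs (Fin.rev j) else _)
      rw [if_pos rfl, if_pos rfl]
      exact hθsne _ _ (fun h => hij (by rw [← Fin.rev_rev i, h, Fin.rev_rev])))
  have hA₂diag : (fun i => A₂ i i) = (fun i => θs (Fin.rev i)) :=
    funext fun i => by show (if i = i then θs (Fin.rev i) else _) = _; rw [if_pos rfl]
  rw [hA₂diag] at hQ₂eq0
  have hQ₂unit : IsUnit Q₂ := LPAux.isUnit_of_unit_upper Q₂ hQ₂tri hQ₂diag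
  have hQ₂det : IsUnit Q₂.det := (Matrix.isUnit_iff_isUnit_det Q₂).mp hQ₂unit
  -- diagonalizer of A with reversed order: N
  set Z : Matrix (Fin (d+1)) (Fin (d+1)) K := LPAux.Zm K (d+1) with hZdef
  have hZZ : Z * Z = 1 := LPAux.Zm_mul_Zm
  set M₃ : Matrix (Fin (d+1)) (Fin (d+1)) K := Z * A * Z with hM₃def
  have hM₃app : ∀ i j, M₃ i j = A (Fin.rev i) (Fin.rev j) := fun i j =>
    LPAux.Zm_conj_apply A i j
  obtain ⟨Q₃, hQ₃tri, hQ₃diag, hQ₃eq0⟩ := LPAux.exists_unit_upper_diagonalizer M₃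
    (fun i j hji => by
      rw [hM₃app, hA, if_neg (fun h => absurd (Fin.rev_injective h) (ne_of_gt hji)),
        if_neg (by
          have h1 := Fin.lt_def.mp hji
          have h2 := Fin.val_rev i
          have h3 := Fin.val_rev j
          have := i.isLt; have := j.isLt
          omega)])
    (fun i j hij => by
      rw [hM₃app, hM₃app, hA, if_pos rfl, hA, if_pos rfl]
      exact hθne _ _ (fun h => hij (by rw [← Fin.rev_rev i, h, Fin.rev_rev])))
  have hM₃diag : (fun i => M₃ i i) = (fun i => θ (Fin.rev i)) :=
    funext fun i => by rw [hM₃app, hA, if_pos rfl]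
  rw [hM₃diag] at hQ₃eq0
  have hQ₃unit : IsUnit Q₃ := LPAux.isUnit_of_unit_upper Q₃ hQ₃tri hQ₃diag
  set N : Matrix (Fin (d+1)) (Fin (d+1)) K := Z * Q₃ * Z with hNdef
  have hNapp : ∀ i j, N i j = Q₃ (Fin.rev i) (Fin.rev j) := fun i j =>
    LPAux.Zm_conj_apply Q₃ i j
  have hNtri : ∀ i j : Fin (d+1), i < j → N i j = 0 := fun i j hij => by
    rw [hNapp]; exact hQ₃tri _ _ (by rwa [Fin.rev_lt_rev])
  have hNdiag : ∀ i, N i i = 1 := fun i => by rw [hNapp]; exact hQ₃diag _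
  have hNunit : IsUnit N := LPAux.isUnit_of_unit_lower N hNtri hNdiag
  have hNdet : IsUnit N.det := (Matrix.isUnit_iff_isUnit_det N).mp hNunit
  have hNl : N⁻¹ * N = 1 := Matrix.nonsing_inv_mul _ hNdet
  have hNr : N * N⁻¹ = 1 := Matrix.mul_nonsing_inv _ hNdet
  -- A * N = N * Dθ
  have hNeq : A * N = N * Dθ := by
    have h1 : A * Z = Z * M₃ := by
      rw [hM₃def]
      calc A * Z = (Z * Z) * A * Z := by rw [hZZ, Matrix.one_mul]
      _ = Z * (Z * A * Z) := by simp only [Matrix.mul_assoc]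
    have h2 : Matrix.diagonal (fun i => θ (Fin.rev i)) * Z = Z * Dθ :=
      LPAux.diag_rev_mul_Zm θ
    calc A * N = ((A * Z) * Q₃) * Z := by simp only [hNdef, Matrix.mul_assoc]
    _ = ((Z * M₃) * Q₃) * Z := by rw [h1]
    _ = (Z * (M₃ * Q₃)) * Z := by simp only [Matrix.mul_assoc]
    _ = (Z * (Q₃ * Matrix.diagonal (fun i => θ (Fin.rev i)))) * Z := by rw [hQ₃eq0]
    _ = (Z * Q₃) * (Matrix.diagonal (fun i => θ (Fin.rev i)) * Z) := by
      simp only [Matrix.mul_assoc]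
    _ = (Z * Q₃) * (Z * Dθ) := by rw [h2]
    _ = N * Dθ := by simp only [hNdef, Matrix.mul_assoc]
  -- reversed-column version of Q₂
  set Q₂' : Matrix (Fin (d+1)) (Fin (d+1)) K := Q₂ * Z with hQ₂'def
  have hQ₂'eq : A₂ * Q₂' = Q₂' * Ds := by
    have h2 : Matrix.diagonal (fun i => θs (Fin.rev i)) * Z = Z * Ds :=
      LPAux.diag_rev_mul_Zm θs
    calc A₂ * Q₂' = (A₂ * Q₂) * Z := by simp only [hQ₂'def, Matrix.mul_assoc]
    _ = (Q₂ * Matrix.diagonal (fun i => θs (Fin.rev i))) * Z := by rw [hQ₂eq0]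
    _ = Q₂ * (Matrix.diagonal (fun i => θs (Fin.rev i)) * Z) := by
      simp only [Matrix.mul_assoc]
    _ = Q₂ * (Z * Ds) := by rw [h2]
    _ = Q₂' * Ds := by simp only [hQ₂'def, Matrix.mul_assoc]
  have hQ₂'unit : IsUnit Q₂' := hQ₂unit.mul LPAux.isUnit_Zm
  -- T and T₂
  set T : Matrix (Fin (d+1)) (Fin (d+1)) K := Q⁻¹ * A * Q with hTdef
  have hQT : Q * T = A * Q := by
    calc Q * T = (Q * Q⁻¹) * A * Q := by simp only [hTdef, Matrix.mul_assoc]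
    _ = A * Q := by rw [hQr, Matrix.one_mul]
  obtain ⟨hTlow, hTsub⟩ := LPAux.lleft Q T A θ (fun _ => 1) hQtri hQdiag
    (fun i j => hA i j) hQT
  set T₂ : Matrix (Fin (d+1)) (Fin (d+1)) K := Q₂⁻¹ * A * Q₂ with hT₂def
  have hQ₂T : Q₂ * T₂ = A * Q₂ := by
    calc Q₂ * T₂ = (Q₂ * Q₂⁻¹) * A * Q₂ := by simp only [hT₂def, Matrix.mul_assoc]
    _ = A * Q₂ := by rw [Matrix.mul_nonsing_inv _ hQ₂det, Matrix.one_mul]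
  obtain ⟨hT₂low, hT₂sub⟩ := LPAux.lleft Q₂ T₂ A θ (fun _ => 1) hQ₂tri hQ₂diag
    (fun i j => hA i j) hQ₂T
  -- H
  set XQ : Matrix (Fin (d+1)) (Fin (d+1)) K := Xm * Q₂' with hXQdef
  have hAsXQ : As * XQ = XQ * Ds := by
    calc As * XQ = (As * Xm) * Q₂' := by simp only [hXQdef, Matrix.mul_assoc]
    _ = Xm * (A₂ * Q₂') := by rw [hAsX]; simp only [Matrix.mul_assoc]
    _ = Xm * (Q₂' * Ds) := by rw [hQ₂'eq]
    _ = XQ * Ds := by simp only [hXQdef, Matrix.mul_assoc]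
  set H : Matrix (Fin (d+1)) (Fin (d+1)) K := Q⁻¹ * XQ with hHdef
  have hQH : Q * H = XQ := by
    calc Q * H = (Q * Q⁻¹) * XQ := by simp only [hHdef, Matrix.mul_assoc]
    _ = XQ := by rw [hQr, Matrix.one_mul]
  have hQinvAs : Q⁻¹ * As = Ds * Q⁻¹ := by
    calc Q⁻¹ * As = Q⁻¹ * As * (Q * Q⁻¹) := by rw [hQr, Matrix.mul_one]
    _ = Q⁻¹ * (As * Q) * Q⁻¹ := by simp only [Matrix.mul_assoc]
    _ = Q⁻¹ * (Q * Ds) * Q⁻¹ := by rw [hQeq]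
    _ = (Q⁻¹ * Q) * (Ds * Q⁻¹) := by simp only [Matrix.mul_assoc]
    _ = Ds * Q⁻¹ := by rw [hQl, Matrix.one_mul]
  have hHcomm : H * Ds = Ds * H := by
    calc H * Ds = Q⁻¹ * (XQ * Ds) := by simp only [hHdef, Matrix.mul_assoc]
    _ = Q⁻¹ * (As * XQ) := by rw [hAsXQ]
    _ = (Q⁻¹ * As) * XQ := by simp only [Matrix.mul_assoc]
    _ = (Ds * Q⁻¹) * XQ := by rw [hQinvAs]
    _ = Ds * H := by simp only [hHdef, Matrix.mul_assoc]
  have hHoff : ∀ i j : Fin (d+1), i ≠ j → H i j = 0 :=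
    LPAux.offdiag_zero_of_comm_diagonal H θs hHcomm hθsne
  have hHunit : IsUnit H := (LPAux.isUnit_inv_of_isUnit Q hQunit).mul
    (hXunit.mul hQ₂'unit)
  have hHne : ∀ i, H i i ≠ 0 := LPAux.diag_ne_zero_of_isUnit H hHoff hHunit
  -- T * H = H * (Z * T₂ * Z)
  set T₂' : Matrix (Fin (d+1)) (Fin (d+1)) K := Z * T₂ * Z with hT₂'def
  have hT₂'app : ∀ i j, T₂' i j = T₂ (Fin.rev i) (Fin.rev j) := fun i j =>
    LPAux.Zm_conj_apply T₂ i j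
  have hAQ₂' : A * Q₂' = Q₂' * T₂' := by
    calc A * Q₂' = (A * Q₂) * Z := by simp only [hQ₂'def, Matrix.mul_assoc]
    _ = (Q₂ * T₂) * Z := by rw [hQ₂T]
    _ = (Q₂ * (Z * Z) * T₂) * Z := by rw [hZZ, Matrix.mul_one]
    _ = Q₂' * T₂' := by simp only [hQ₂'def, hT₂'def, Matrix.mul_assoc]
  have hTH : T * H = H * T₂' := by
    calc T * H = Q⁻¹ * A * (Q * H) := by simp only [hTdef, Matrix.mul_assoc]
    _ = Q⁻¹ * ((A * Xm) * Q₂') := by rw [hQH]; simp only [hXQdef, Matrix.mul_assoc]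
    _ = Q⁻¹ * (Xm * (A * Q₂')) := by rw [hAX]; simp only [Matrix.mul_assoc]
    _ = Q⁻¹ * (Xm * (Q₂' * T₂')) := by rw [hAQ₂']
    _ = H * T₂' := by simp only [hHdef, hXQdef, Matrix.mul_assoc]
  have hTHentry : ∀ i j : Fin (d+1), T i j * H j j = H i i * T₂ (Fin.rev i) (Fin.rev j) := by
    intro i j
    have h1 : (T * H) i j = T i j * H j j :=
      LPAux.mul_apply_of_offdiag_zero_right H T hHoff i j
    have h2 : (H * T₂') i j = H i i * T₂' i j :=
      LPAux.mul_apply_of_offdiag_zero_left H T₂' hHoff i j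
    rw [← h1, hTH, h2, hT₂'app]
  -- T is tridiagonal
  have hThigh : ∀ i j : Fin (d+1), (i:ℕ) + 1 < (j:ℕ) → T i j = 0 := by
    intro i j hij
    have h1 : T₂ (Fin.rev i) (Fin.rev j) = 0 := by
      apply hT₂low
      have h2 := Fin.val_rev i; have h3 := Fin.val_rev j
      have := i.isLt; have := j.isLt; omega
    have h4 := hTHentry i j
    rw [h1, mul_zero] at h4
    rcases mul_eq_zero.mp h4 with h | h
    · exact h
    · exact absurd h (hHne j)
  have hTsup : ∀ i j : Fin (d+1), (i:ℕ) + 1 = (j:ℕ) → T i j ≠ 0 := by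
    intro i j hij
    have h1 : T₂ (Fin.rev i) (Fin.rev j) = 1 := by
      apply hT₂sub
      have h2 := Fin.val_rev i; have h3 := Fin.val_rev j
      have := i.isLt; have := j.isLt; omega
    have h4 := hTHentry i j
    rw [h1, mul_one] at h4
    intro hc
    rw [hc, zero_mul] at h4
    exact hHne i h4.symm
  -- the symmetrizer
  set tnat : ℕ → K := fun k => if h : k + 1 < d+1 then T ⟨k, by omega⟩ ⟨k+1, h⟩ else 1
    with htnatdef
  have htne : ∀ k, tnat k ≠ 0 := by
    intro k
    rw [htnatdef]
    dsimp only
    split_ifs with h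
    · exact hTsup ⟨k, by omega⟩ ⟨k+1, h⟩ rfl
    · exact one_ne_zero
  set εf : ℕ → K := fun m => Nat.rec (motive := fun _ => K) 1 (fun k ih => tnat k * ih) m
    with hεfdef
  have hεf0 : εf 0 = 1 := rfl
  have hεfs : ∀ k, εf (k+1) = tnat k * εf k := fun k => rfl
  have hεne : ∀ m, εf m ≠ 0 := by
    intro m
    induction m with
    | zero => rw [hεf0]; exact one_ne_zero
    | succ k ih => rw [hεfs]; exact mul_ne_zero (htne k) ih
  set ε : Fin (d+1) → K := fun i => εf (i:ℕ) with hεdef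
  set E : Matrix (Fin (d+1)) (Fin (d+1)) K := Matrix.diagonal ε with hEdef
  have hEunit : IsUnit E := by
    rw [hEdef, Matrix.isUnit_iff_isUnit_det, Matrix.det_diagonal, isUnit_iff_ne_zero]
    exact Finset.prod_ne_zero_iff.mpr (fun i _ => hεne _)
  -- key symmetry: E * T = Tᵀ * E
  have hET : E * T = T.transpose * E := by
    ext i j
    rw [hEdef, Matrix.diagonal_mul, Matrix.mul_diagonal, Matrix.transpose_apply]
    show ε i * T i j = T j i * ε j
    rcases Nat.lt_trichotomy ((i:ℕ)+1) (j:ℕ) with h | h | h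
    · rw [hThigh i j h, hTlow j i h, mul_zero, zero_mul]
    · -- j = i+1
      have hj : (j:ℕ) = (i:ℕ) + 1 := h.symm
      have hTij : T i j = tnat (i:ℕ) := by
        rw [htnatdef]
        dsimp only
        rw [dif_pos (by omega : (i:ℕ) + 1 < d+1)]
        exact (congrArg (T i) (Fin.ext (by simp only [Fin.val_mk]; omega))).symm
      have hTji : T j i = 1 := hTsub j i h
      rw [hTij, hTji, one_mul, hεdef]
      show εf (i:ℕ) * tnat (i:ℕ) = εf (j:ℕ)
      rw [hj, hεfs]
      ring
    · rcases Nat.lt_trichotomy ((j:ℕ)+1) (i:ℕ) with h' | h' | h'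
      · rw [hThigh j i h', hTlow i j h', mul_zero, zero_mul]
      · -- i = j+1
        have hi : (i:ℕ) = (j:ℕ) + 1 := h'.symm
        have hTji : T j i = tnat (j:ℕ) := by
          rw [htnatdef]
          dsimp only
          rw [dif_pos (by omega : (j:ℕ) + 1 < d+1)]
          exact (congrArg (T j) (Fin.ext (by simp only [Fin.val_mk]; omega))).symm
        have hTij : T i j = 1 := hTsub i j h'
        rw [hTij, hTji, mul_one, hεdef]
        show εf (i:ℕ) = tnat (j:ℕ) * εf (j:ℕ)
        rw [hi, hεfs]
      · -- i = j
        have : i = j := Fin.ext (by omega)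
        subst this
        ring
  -- the bilinear form
  set Sm : Matrix (Fin (d+1)) (Fin (d+1)) K := (Q⁻¹).transpose * E * Q⁻¹ with hSmdef
  have hQinvA : Q⁻¹ * A = T * Q⁻¹ := by
    calc Q⁻¹ * A = Q⁻¹ * A * (Q * Q⁻¹) := by rw [hQr, Matrix.mul_one]
    _ = Q⁻¹ * (A * Q) * Q⁻¹ := by simp only [Matrix.mul_assoc]
    _ = Q⁻¹ * (Q * T) * Q⁻¹ := by rw [hQT]
    _ = (Q⁻¹ * Q) * (T * Q⁻¹) := by simp only [Matrix.mul_assoc]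
    _ = T * Q⁻¹ := by rw [hQl, Matrix.one_mul]
  have hSmA : Sm * A = A.transpose * Sm := by
    calc Sm * A = (Q⁻¹).transpose * E * (Q⁻¹ * A) := by simp only [hSmdef, Matrix.mul_assoc]
    _ = (Q⁻¹).transpose * (E * T) * Q⁻¹ := by rw [hQinvA]; simp only [Matrix.mul_assoc]
    _ = (Q⁻¹).transpose * (T.transpose * E) * Q⁻¹ := by rw [hET]
    _ = ((Q⁻¹).transpose * T.transpose) * E * Q⁻¹ := by simp only [Matrix.mul_assoc]
    _ = (T * Q⁻¹).transpose * E * Q⁻¹ := by rw [← Matrix.transpose_mul]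
    _ = (Q⁻¹ * A).transpose * E * Q⁻¹ := by rw [hQinvA]
    _ = A.transpose * Sm := by
      rw [Matrix.transpose_mul Q⁻¹ A]; simp only [hSmdef, Matrix.mul_assoc]
  have hSmAs : Sm * As = As.transpose * Sm := by
    have hED : E * Ds = Ds * E := by
      rw [hEdef, hDsdef, Matrix.diagonal_mul_diagonal, Matrix.diagonal_mul_diagonal]
      exact congrArg _ (funext fun i => mul_comm _ _)
    calc Sm * As = (Q⁻¹).transpose * E * (Q⁻¹ * As) := by simp only [hSmdef, Matrix.mul_assoc]
    _ = (Q⁻¹).transpose * (E * Ds) * Q⁻¹ := by rw [hQinvAs]; simp only [Matrix.mul_assoc]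
    _ = (Q⁻¹).transpose * (Ds * E) * Q⁻¹ := by rw [hED]
    _ = ((Q⁻¹).transpose * Ds.transpose) * E * Q⁻¹ := by
      rw [hDsdef, Matrix.diagonal_transpose]; simp only [Matrix.mul_assoc]
    _ = (Ds * Q⁻¹).transpose * E * Q⁻¹ := by rw [← Matrix.transpose_mul]
    _ = (Q⁻¹ * As).transpose * E * Q⁻¹ := by rw [hQinvAs]
    _ = As.transpose * Sm := by
      rw [Matrix.transpose_mul Q⁻¹ As]; simp only [hSmdef, Matrix.mul_assoc]
  have hQinvUnit : IsUnit Q⁻¹ := LPAux.isUnit_inv_of_isUnit Q hQunit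
  have hQinvTunit : IsUnit (Q⁻¹).transpose := by
    rw [Matrix.isUnit_iff_isUnit_det, Matrix.det_transpose]
    exact (Matrix.isUnit_iff_isUnit_det _).mp hQinvUnit
  have hSmUnit : IsUnit Sm := (hQinvTunit.mul hEunit).mul hQinvUnit
  -- the matrix of As in the eigenbasis of A
  set C : Matrix (Fin (d+1)) (Fin (d+1)) K := N⁻¹ * As * N with hCdef
  have hNC : N * C = As * N := by
    calc N * C = (N * N⁻¹) * As * N := by simp only [hCdef, Matrix.mul_assoc]
    _ = As * N := by rw [hNr, Matrix.one_mul]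
  -- the Gram matrix
  set Γ : Matrix (Fin (d+1)) (Fin (d+1)) K := N.transpose * Sm * N with hΓdef
  have hΓD : Γ * Dθ = Dθ * Γ := by
    calc Γ * Dθ = N.transpose * Sm * (N * Dθ) := by simp only [hΓdef, Matrix.mul_assoc]
    _ = N.transpose * (Sm * A) * N := by rw [← hNeq]; simp only [Matrix.mul_assoc]
    _ = N.transpose * A.transpose * (Sm * N) := by rw [hSmA]; simp only [Matrix.mul_assoc]
    _ = (A * N).transpose * (Sm * N) := by rw [← Matrix.transpose_mul]
    _ = (N * Dθ).transpose * (Sm * N) := by rw [hNeq]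
    _ = Dθ * (N.transpose * (Sm * N)) := by
      rw [Matrix.transpose_mul N Dθ, hDθdef, Matrix.diagonal_transpose]
      simp only [Matrix.mul_assoc]
    _ = Dθ * Γ := by simp only [hΓdef, Matrix.mul_assoc]
  have hΓoff : ∀ i j : Fin (d+1), i ≠ j → Γ i j = 0 :=
    LPAux.offdiag_zero_of_comm_diagonal Γ θ hΓD hθne
  have hNTunit : IsUnit N.transpose := by
    rw [Matrix.isUnit_iff_isUnit_det, Matrix.det_transpose]
    exact (Matrix.isUnit_iff_isUnit_det _).mp hNunit
  have hΓunit : IsUnit Γ := (hNTunit.mul hSmUnit).mul hNunit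
  have hκ : ∀ i, Γ i i ≠ 0 := LPAux.diag_ne_zero_of_isUnit Γ hΓoff hΓunit
  have hΓC : Γ * C = C.transpose * Γ := by
    calc Γ * C = N.transpose * Sm * (N * C) := by simp only [hΓdef, hCdef, Matrix.mul_assoc]
    _ = N.transpose * (Sm * As) * N := by rw [hNC]; simp only [Matrix.mul_assoc]
    _ = N.transpose * As.transpose * (Sm * N) := by rw [hSmAs]; simp only [Matrix.mul_assoc]
    _ = (As * N).transpose * (Sm * N) := by rw [← Matrix.transpose_mul]
    _ = (N * C).transpose * (Sm * N) := by rw [hNC]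
    _ = C.transpose * (N.transpose * (Sm * N)) := by
      rw [Matrix.transpose_mul N C]; simp only [Matrix.mul_assoc]
    _ = C.transpose * Γ := by simp only [hΓdef, Matrix.mul_assoc]
  have hΓCentry : ∀ i j : Fin (d+1), Γ i i * C i j = C j i * Γ j j := by
    intro i j
    have h1 : (Γ * C) i j = Γ i i * C i j :=
      LPAux.mul_apply_of_offdiag_zero_left Γ C hΓoff i j
    have h2 : (C.transpose * Γ) i j = C.transpose i j * Γ j j :=
      LPAux.mul_apply_of_offdiag_zero_right Γ C.transpose hΓoff i j
    rw [← h1, hΓC, h2, Matrix.transpose_apply]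
  -- the structure of C from the lower-triangular change of basis
  have hCT : C.transpose * N.transpose = N.transpose * As.transpose := by
    rw [← Matrix.transpose_mul, ← Matrix.transpose_mul, hNC]
  have hAsT : ∀ i j : Fin (d+1), As.transpose i j =
      if i = j then θs i else if (j:ℕ) + 1 = (i:ℕ) then φ i else 0 := by
    intro i j
    rw [Matrix.transpose_apply, hAs]
    by_cases h : j = i
    · subst h; simp
    · rw [if_neg h, if_neg (Ne.symm h)]
  obtain ⟨hCtlow, hCtsub⟩ := LPAux.lright N.transpose C.transpose As.transpose θs φ
    (fun i j hji => by rw [Matrix.transpose_apply]; exact hNtri j i hji)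
    (fun i => by rw [Matrix.transpose_apply]; exact hNdiag i) hAsT hCT
  -- assemble
  constructor
  · refine ⟨Q, hQunit, ⟨fun i j hij => ?_, fun i j hij => ?_⟩, ?_⟩
    · rw [← hTdef]
      rcases hij with h | h
      · exact hThigh i j h
      · exact hTlow i j h
    · rw [← hTdef]
      rcases hij with h | h
      · exact hTsup i j h
      · rw [hTsub i j h]; exact one_ne_zero
    · have hQAsQ : Q⁻¹ * As * Q = Ds := by
        calc Q⁻¹ * As * Q = (Ds * Q⁻¹) * Q := by rw [hQinvAs]
        _ = Ds * (Q⁻¹ * Q) := by simp only [Matrix.mul_assoc]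
        _ = Ds := by rw [hQl, Matrix.mul_one]
      rw [hQAsQ, hDsdef]
      exact Matrix.isDiag_diagonal θs
  · refine ⟨N, hNunit, ⟨fun i j hij => ?_, fun i j hij => ?_⟩, ?_⟩
    · rw [← hCdef]
      rcases hij with h | h
      · -- i + 1 < j
        have h1 : C.transpose j i = 0 := hCtlow j i h
        rwa [Matrix.transpose_apply] at h1
      · -- j + 1 < i
        have h1 : C j i = 0 := by
          have := hCtlow i j h
          rwa [Matrix.transpose_apply] at this
        have h2 := hΓCentry i j
        rw [h1, zero_mul] at h2
        rcases mul_eq_zero.mp h2 with hc | hc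
        · exact absurd hc (hκ i)
        · exact hc
    · rw [← hCdef]
      rcases hij with h | h
      · -- i + 1 = j
        have h1 : C i j = φ j := by
          have := hCtsub j i h
          rwa [Matrix.transpose_apply] at this
        rw [h1]
        exact hφ j (fun h0 => by rw [h0] at h; simp at h)
      · -- j + 1 = i
        have h1 : C j i = φ i := by
          have := hCtsub i j h
          rwa [Matrix.transpose_apply] at this
        have h2 := hΓCentry i j
        rw [h1] at h2
        intro hc
        rw [hc, mul_zero] at h2
        exact mul_ne_zero (hφ i (fun h0 => by rw [h0] at h; simp at h)) (hκ j) h2.symm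
    · have hNAN : N⁻¹ * A * N = Dθ := by
        calc N⁻¹ * A * N = N⁻¹ * (A * N) := by simp only [Matrix.mul_assoc]
        _ = N⁻¹ * (N * Dθ) := by rw [hNeq]
        _ = (N⁻¹ * N) * Dθ := by simp only [Matrix.mul_assoc]
        _ = Dθ := by rw [hNl, Matrix.one_mul]
      rw [hNAN, hDθdef]
      exact Matrix.isDiag_diagonal θ
end
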